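/- arXiv:2211.05752 — 2 statements merged into one kernel-verified Lean document; each statement's English description precedes it below -/
import Mathlib

section
/- Let n ≥ 1 and let φ be an automorphism of the free group F_n such that φ^k is an inner automorphism of F_n for some k ≥ 1 (i.e. φ has finite order in Out(F_n)). Then the mapping torus G = F_n ⋊_φ ℤ is subgroup separable. -/
open scoped Classical

/-- A group is *subgroup separable (LERF)* if every finitely generated subgroup is the
intersection of the finite-index subgroups containing it. -/
def SubgroupSeparable (G : Type*) [Group G] : Prop :=
  ∀ H : Subgroup G, H.FG → H = ⨅ (K : Subgroup G) (_ : H ≤ K) (_ : K.FiniteIndex), K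

/-- The minimal word length of a cyclically reduced word representing a conjugate of `g`,
i.e. the minimum of the reduced word lengths over the conjugacy class of `g`. -/
noncomputable def conjLength {n : ℕ} (g : FreeGroup (Fin n)) : ℕ :=
  sInf {m : ℕ | ∃ h : FreeGroup (Fin n), ((h * g * h⁻¹).toWord).length = m}

/-- The conjugacy class of `g` grows polynomially of degree `d` under iteration of `φ`:
`C₁·k^d ≤ |φ^k(g)‾| ≤ C₂·k^d` for all `k ≥ 1`. -/
def ConjClassGrowsPolyDeg {n : ℕ} (φ : MulAut (FreeGroup (Fin n))) (g : FreeGroup (Fin n))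
    (d : ℕ) : Prop :=
  ∃ C₁ C₂ : ℝ, 0 < C₁ ∧ 0 < C₂ ∧ ∀ k : ℕ, 1 ≤ k →
    C₁ * (k : ℝ) ^ d ≤ (conjLength ((φ ^ k) g) : ℝ) ∧
    (conjLength ((φ ^ k) g) : ℝ) ≤ C₂ * (k : ℝ) ^ d

/-- The conjugacy class of `g` grows polynomially of degree at most `d` under `φ`:
`|φ^k(g)‾| ≤ C·k^d` for all `k ≥ 1`. -/
def ConjClassGrowsAtMost {n : ℕ} (φ : MulAut (FreeGroup (Fin n))) (g : FreeGroup (Fin n))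
    (d : ℕ) : Prop :=
  ∃ C : ℝ, 0 < C ∧ ∀ k : ℕ, 1 ≤ k → (conjLength ((φ ^ k) g) : ℝ) ≤ C * (k : ℝ) ^ d

/-- The automorphism `φ` grows polynomially of degree `d`: every conjugacy class grows
polynomially of degree at most `d`, and some conjugacy class grows of degree exactly `d`. -/
def AutGrowsPolyDeg {n : ℕ} (φ : MulAut (FreeGroup (Fin n))) (d : ℕ) : Prop :=
  (∀ g, ConjClassGrowsAtMost φ g d) ∧ ∃ g, ConjClassGrowsPolyDeg φ g d

/-- `φ` is polynomially growing. -/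
def PolyGrowing {n : ℕ} (φ : MulAut (FreeGroup (Fin n))) : Prop :=
  ∃ d : ℕ, AutGrowsPolyDeg φ d

/-- The mapping torus `F_n ⋊_φ ℤ`, where the generator `1` of `ℤ` acts by `φ`. -/
abbrev MappingTorus (n : ℕ) (φ : MulAut (FreeGroup (Fin n))) :=
  SemidirectProduct (FreeGroup (Fin n)) (Multiplicative ℤ)
    (zpowersHom (MulAut (FreeGroup (Fin n))) φ)

/-- Separation form of LERF. -/
def MySep (G : Type*) [Group G] : Prop :=
  ∀ K : Subgroup G, K.FG → ∀ g : G, g ∉ K →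
    ∃ M : Subgroup G, K ≤ M ∧ M.FiniteIndex ∧ g ∉ M

theorem Subgroup.FG.map' {G N : Type*} [Group G] [Group N] {K : Subgroup G} (h : K.FG)
    (f : G →* N) : (K.map f).FG := by
  obtain ⟨S, hS⟩ := h
  exact ⟨S.image f, by rw [Finset.coe_image, ← MonoidHom.map_closure, hS]⟩

theorem mySep_iff {G : Type*} [Group G] :
    MySep G ↔ (∀ H : Subgroup G, H.FG →
      H = ⨅ (K : Subgroup G) (_ : H ≤ K) (_ : K.FiniteIndex), K) := by
  constructor
  · intro hs H hH
    refine le_antisymm (le_iInf fun K => le_iInf fun hK => le_iInf fun _ => hK) ?_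
    intro x hx
    by_contra hxH
    obtain ⟨M, hKM, hMfi, hxM⟩ := hs H hH x hxH
    simp only [Subgroup.mem_iInf] at hx
    exact hxM (hx M hKM hMfi)
  · intro h K hK g hg
    rw [h K hK] at hg
    simp only [Subgroup.mem_iInf, not_forall] at hg
    obtain ⟨M, hKM, hMfi, hgM⟩ := hg
    exact ⟨M, hKM, hMfi, hgM⟩

theorem mySep_of_mulEquiv {A B : Type*} [Group A] [Group B] (e : A ≃* B) (hA : MySep A) :
    MySep B := by
  intro K hK g hg
  have hcm : Subgroup.comap (e : A →* B) K = Subgroup.map (e.symm : B →* A) K := by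
    rw [Subgroup.map_equiv_eq_comap_symm]
    simp
  have hK0 : (Subgroup.comap (e : A →* B) K).FG := by
    rw [hcm]; exact hK.map' _
  have hg0 : e.symm g ∉ Subgroup.comap (e : A →* B) K := by
    simp only [Subgroup.mem_comap]
    simpa using hg
  obtain ⟨M₀, hKM₀, hM₀fi, hgM₀⟩ := hA _ hK0 _ hg0
  refine ⟨Subgroup.comap (e.symm : B →* A) M₀, ?_, ?_, ?_⟩
  · intro x hx
    simp only [Subgroup.mem_comap]
    exact hKM₀ (by simpa using hx)
  · refine ⟨?_⟩
    rw [Subgroup.index_comap_of_surjective _ e.symm.surjective]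
    exact hM₀fi.index_ne_zero
  · intro hmem
    rw [Subgroup.mem_comap] at hmem
    exact hgM₀ hmem

theorem fg_subgroupOf {G : Type*} [Group G] (P H : Subgroup G) (hPH : P ≤ H) (hP : P.FG) :
    (P.subgroupOf H).FG := by
  obtain ⟨S, hS⟩ := hP
  have hSmem : ∀ s ∈ S, s ∈ H := fun s hs => hPH (hS ▸ Subgroup.subset_closure hs)
  refine ⟨S.attach.image (fun s => (⟨s.1, hSmem s.1 s.2⟩ : ↥H)), ?_⟩
  apply Subgroup.map_injective H.subtype_injective
  rw [MonoidHom.map_closure, Subgroup.subgroupOf_map_subtype, inf_eq_left.mpr hPH]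
  have himg : (H.subtype '' ((S.attach.image (fun s => (⟨s.1, hSmem s.1 s.2⟩ : ↥H))) : Set ↥H))
      = (S : Set G) := by
    ext x
    constructor
    · rintro ⟨y, hy, rfl⟩
      rw [Finset.mem_coe, Finset.mem_image] at hy
      obtain ⟨s, _, rfl⟩ := hy
      simpa using s.2
    · intro hx
      refine ⟨⟨x, hSmem x hx⟩, ?_, rfl⟩
      rw [Finset.mem_coe, Finset.mem_image]
      exact ⟨⟨x, hx⟩, Finset.mem_attach _ _, rfl⟩
  rw [himg, hS]

theorem mySep_of_finiteIndex {G : Type*} [Group G] (H : Subgroup G) [H.FiniteIndex]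
    (hH : MySep ↥H) : MySep G := by
  intro K hK g hg
  haveI : Group.FG ↥K := (Group.fg_iff_subgroup_fg K).2 hK
  set J : Subgroup ↥K := H.subgroupOf K with hJdef
  have hJfg : J.FG := (Group.fg_iff_subgroup_fg J).1 inferInstance
  have hKH_fg : (K.subgroupOf H).FG := by
    have h1 : (J.map K.subtype).FG := hJfg.map' _
    rw [Subgroup.subgroupOf_map_subtype] at h1
    have h2 := fg_subgroupOf (H ⊓ K) H inf_le_left h1
    rwa [inf_comm, Subgroup.inf_subgroupOf_right] at h2
  have hsep : ∀ q : ↥K ⧸ J, ∃ L : Subgroup ↥H, K.subgroupOf H ≤ L ∧ L.FiniteIndex ∧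
      (∀ hh : ((q.out : ↥K) : G)⁻¹ * g ∈ H, (⟨_, hh⟩ : ↥H) ∉ L) := by
    intro q
    by_cases hq : ((q.out : ↥K) : G)⁻¹ * g ∈ H
    · have hnot : (⟨_, hq⟩ : ↥H) ∉ K.subgroupOf H := by
        intro hmem
        rw [Subgroup.mem_subgroupOf] at hmem
        exact hg (by simpa using K.mul_mem (q.out : ↥K).2 hmem)
      obtain ⟨L, h1, h2, h3⟩ := hH _ hKH_fg _ hnot
      exact ⟨L, h1, h2, fun hh => h3⟩
    · exact ⟨⊤, le_top, inferInstance, fun hh => absurd hh hq⟩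
  choose Lq hL1 hL2 hL3 using hsep
  let L : Subgroup G := ⨅ q, (Lq q).map H.subtype
  have hLle : ∀ q, L ≤ (Lq q).map H.subtype := fun q => iInf_le _ q
  have hLH : L ≤ H := le_trans (hLle (QuotientGroup.mk 1)) (Subgroup.map_subtype_le _)
  haveI hLfi : L.FiniteIndex := by
    refine Subgroup.finiteIndex_iInf (fun q => ?_)
    refine ⟨?_⟩
    have heq : ((Lq q).map H.subtype).relIndex H * H.index = ((Lq q).map H.subtype).index :=
      Subgroup.relIndex_mul_index (Subgroup.map_subtype_le _)
    have hrel : ((Lq q).map H.subtype).relIndex H = (Lq q).index := by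
      rw [Subgroup.relIndex, Subgroup.subgroupOf, Subgroup.comap_map_eq_self_of_injective
        H.subtype_injective]
    rw [← heq, hrel]
    exact mul_ne_zero (hL2 q).index_ne_zero Subgroup.FiniteIndex.index_ne_zero
  let ρ := MulAction.toPermHom G (G ⧸ L)
  let M := (K.map ρ).comap ρ
  have hKM : K ≤ M := fun x hx => Subgroup.mem_comap.2 (Subgroup.mem_map_of_mem _ hx)
  have hker : ρ.ker ≤ M := by
    intro x hx
    rw [MonoidHom.mem_ker] at hx
    exact Subgroup.mem_comap.2 (by rw [hx]; exact (K.map ρ).one_mem)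
  have hkerfi : ρ.ker.FiniteIndex := by
    refine ⟨?_⟩
    rw [Subgroup.index_ker]
    exact Nat.card_ne_zero.2 ⟨⟨⟨1, Subgroup.one_mem _⟩⟩, inferInstance⟩
  have hMfi : M.FiniteIndex :=
    ⟨ne_zero_of_dvd_ne_zero hkerfi.index_ne_zero (Subgroup.index_dvd_of_le hker)⟩
  refine ⟨M, hKM, hMfi, ?_⟩
  intro hgM
  rw [Subgroup.mem_comap] at hgM
  obtain ⟨x, hxK, hρ⟩ := Subgroup.mem_map.1 hgM
  have hxg : x⁻¹ * g ∈ ρ.ker := by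
    rw [MonoidHom.mem_ker, map_mul, map_inv, hρ]
    group
  have hxgL : x⁻¹ * g ∈ L := by
    have hnc : ρ.ker = L.normalCore := (Subgroup.normalCore_eq_ker L).symm
    exact L.normalCore_le (hnc ▸ hxg)
  set xK : ↥K := ⟨x, hxK⟩ with hxKdef
  set q : ↥K ⧸ J := QuotientGroup.mk xK with hqdef
  have hout : (q.out)⁻¹ * xK ∈ J := QuotientGroup.eq.1 (QuotientGroup.out_eq' q)
  have h1 : ((q.out : ↥K) : G)⁻¹ * x ∈ H := by
    have hout2 := Subgroup.mem_subgroupOf.1 hout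
    simpa using hout2
  have h2 : x⁻¹ * g ∈ H := hLH hxgL
  have hrg : ((q.out : ↥K) : G)⁻¹ * g ∈ H := by
    have hsplit : ((q.out : ↥K) : G)⁻¹ * g = (((q.out : ↥K) : G)⁻¹ * x) * (x⁻¹ * g) := by
      group
    rw [hsplit]
    exact H.mul_mem h1 h2
  apply hL3 q hrg
  have e1 : (⟨_, hrg⟩ : ↥H) = ⟨((q.out : ↥K) : G)⁻¹ * x, h1⟩ * ⟨x⁻¹ * g, h2⟩ := by
    apply Subtype.ext
    simp [mul_assoc]
  rw [e1]
  refine (Lq q).mul_mem (hL1 q ?_) ?_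
  · rw [Subgroup.mem_subgroupOf]
    have : ((q.out)⁻¹ * xK : ↥K) = ⟨((q.out : ↥K) : G)⁻¹ * x, _⟩ := rfl
    exact (by simpa using ((q.out)⁻¹ * xK : ↥K).2 : ((q.out : ↥K) : G)⁻¹ * x ∈ K)
  · have hmem := (hLle q) hxgL
    obtain ⟨y, hy, hyv⟩ := Subgroup.mem_map.1 hmem
    have : (⟨x⁻¹ * g, h2⟩ : ↥H) = y := Subtype.ext hyv.symm
    rw [this]
    exact hy

/-- Any injective map, restricted to a finite set `S`, extends to a permutation of `S`. -/
theorem exists_perm_extend {X : Type*} (S : Finset X) (π : X → X)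
    (hπ : Function.Injective π) :
    ∃ σ : Equiv.Perm ↥S, ∀ (x : ↥S) (h : π ↑x ∈ S), ↑(σ x) = π ↑x := by
  classical
  set A : Finset X := S.filter (fun x => π x ∈ S) with hA
  have hAS : A ⊆ S := Finset.filter_subset _ _
  set iA : Finset X := A.image π with hiA
  have hiAS : iA ⊆ S := by
    intro y hy
    rw [hiA, Finset.mem_image] at hy
    obtain ⟨x, hx, rfl⟩ := hy
    exact (Finset.mem_filter.1 hx).2
  have hcards : (S \ A).card = (S \ iA).card := by
    rw [Finset.card_sdiff_of_subset hAS, Finset.card_sdiff_of_subset hiAS, hiA,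
      Finset.card_image_of_injective _ hπ]
  have hβcard : Fintype.card ↥(S \ A) = Fintype.card ↥(S \ iA) := by
    simpa [Fintype.card_coe] using hcards
  let β : ↥(S \ A) ≃ ↥(S \ iA) := Fintype.equivOfCardEq hβcard
  have hmem : ∀ x : ↥S, π ↑x ∉ S → ↑x ∈ S \ A := by
    intro x hx
    rw [Finset.mem_sdiff]
    exact ⟨x.2, fun hmem => hx (Finset.mem_filter.1 hmem).2⟩
  let f : ↥S → ↥S := fun x =>
    if h : π ↑x ∈ S then ⟨π ↑x, h⟩
    else ⟨↑(β ⟨↑x, hmem x h⟩), Finset.sdiff_subset (β ⟨↑x, hmem x h⟩).2⟩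
  have hinj : Function.Injective f := by
    intro x y hxy
    by_cases hx : π ↑x ∈ S <;> by_cases hy : π ↑y ∈ S <;> simp only [f, dif_pos, dif_neg, hx, hy] at hxy
    · exact Subtype.ext (hπ (by simpa using congrArg Subtype.val hxy))
    · exfalso
      have h1 : π ↑x ∈ iA := Finset.mem_image_of_mem π (Finset.mem_filter.2 ⟨x.2, hx⟩)
      have h2 := (β ⟨↑y, hmem y hy⟩).2
      rw [Finset.mem_sdiff] at h2
      exact h2.2 (by rw [← (by simpa using congrArg Subtype.val hxy : π ↑x = ↑(β ⟨↑y, hmem y hy⟩))]; exact h1)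
    · exfalso
      have h1 : π ↑y ∈ iA := Finset.mem_image_of_mem π (Finset.mem_filter.2 ⟨y.2, hy⟩)
      have h2 := (β ⟨↑x, hmem x hx⟩).2
      rw [Finset.mem_sdiff] at h2
      exact h2.2 (by rw [(by simpa using congrArg Subtype.val hxy : ↑(β ⟨↑x, hmem x hx⟩) = π ↑y)]; exact h1)
    · have := congrArg Subtype.val hxy
      have hββ : β ⟨↑x, hmem x hx⟩ = β ⟨↑y, hmem y hy⟩ := Subtype.ext (by simpa using this)
      have := β.injective hββ
      exact Subtype.ext (by simpa using congrArg Subtype.val this)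
  have hbij : Function.Bijective f := Finite.injective_iff_bijective.1 hinj
  refine ⟨Equiv.ofBijective f hbij, ?_⟩
  intro x h
  show ↑(f x) = π ↑x
  simp only [f, dif_pos h]

theorem mySep_freeGroup {α : Type*} : MySep (FreeGroup α) := by
  classical
  intro B hB g hg
  obtain ⟨T, hT⟩ := hB
  let X := FreeGroup α ⧸ B
  let sufs : FreeGroup α → List (FreeGroup α) := fun x => x.toWord.tails.map FreeGroup.mk
  let V : List (FreeGroup α) := (g :: T.toList).flatMap sufs
  let S : Finset X := (V.map (QuotientGroup.mk : FreeGroup α → X)).toFinset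
  have hsufS : ∀ x ∈ g :: T.toList, ∀ t ∈ x.toWord.tails,
      (QuotientGroup.mk (FreeGroup.mk t) : X) ∈ S := by
    intro x hx t ht
    rw [List.mem_toFinset, List.mem_map]
    exact ⟨FreeGroup.mk t, List.mem_flatMap.2 ⟨x, hx, List.mem_map.2 ⟨t, ht, rfl⟩⟩, rfl⟩
  have h1S : (QuotientGroup.mk 1 : X) ∈ S := by
    have h := hsufS g (List.mem_cons_self) [] (by
      rw [List.mem_tails]; exact List.nil_suffix)
    rwa [← FreeGroup.one_eq_mk] at h
  have hι : ∀ i : α, Function.Injective (fun q : X => (FreeGroup.of i) • q) :=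
    fun i => MulAction.injective _
  choose σ hσ using fun i : α => exists_perm_extend S _ (hι i)
  let ρ : FreeGroup α →* Equiv.Perm ↥S := FreeGroup.lift σ
  have hsmul : ∀ (i : α) (y : FreeGroup α),
      (FreeGroup.of i) • (QuotientGroup.mk y : X) = QuotientGroup.mk (FreeGroup.of i * y) :=
    fun i y => MulAction.Quotient.smul_mk B _ _
  have key : ∀ L : List (α × Bool),
      (∀ t ∈ L.tails, (QuotientGroup.mk (FreeGroup.mk t) : X) ∈ S) →
      (↑(ρ (FreeGroup.mk L) ⟨_, h1S⟩) : X) = QuotientGroup.mk (FreeGroup.mk L) := by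
    intro L
    induction L with
    | nil =>
      intro _
      rw [show FreeGroup.mk ([] : List (α × Bool)) = 1 from FreeGroup.one_eq_mk.symm, map_one]
      rfl
    | cons a L ih =>
      intro htails
      have htailsL : ∀ t ∈ L.tails, (QuotientGroup.mk (FreeGroup.mk t) : X) ∈ S :=
        fun t ht => htails t (by rw [List.tails_cons]; exact List.mem_cons_of_mem _ ht)
      have hLS : (QuotientGroup.mk (FreeGroup.mk L) : X) ∈ S :=
        htailsL L (by rw [List.mem_tails])
      have haLS : (QuotientGroup.mk (FreeGroup.mk (a :: L)) : X) ∈ S :=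
        htails (a :: L) (by rw [List.mem_tails])
      have hsplit : FreeGroup.mk (a :: L) = FreeGroup.mk [a] * FreeGroup.mk L := by
        rw [FreeGroup.mul_mk]
        rfl
      have hihS : ρ (FreeGroup.mk L) ⟨_, h1S⟩ = ⟨_, hLS⟩ :=
        Subtype.ext (ih htailsL)
      rw [hsplit, map_mul, Equiv.Perm.mul_apply, hihS]
      obtain ⟨i, b⟩ := a
      cases b with
      | true =>
        rw [show FreeGroup.mk [(i, true)] = FreeGroup.of i from rfl, FreeGroup.lift_apply_of]
        have hof : FreeGroup.of i * FreeGroup.mk L = FreeGroup.mk ((i, true) :: L) :=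
          hsplit.symm
        have hmem : (FreeGroup.of i) • (QuotientGroup.mk (FreeGroup.mk L) : X) ∈ S := by
          rw [hsmul, hof]
          exact haLS
        rw [hσ i ⟨_, hLS⟩ hmem, hsmul, hof]
      | false =>
        have hmk : FreeGroup.mk [(i, false)] = (FreeGroup.of i)⁻¹ := by
          rw [show FreeGroup.of i = FreeGroup.mk [(i, true)] from rfl, FreeGroup.inv_mk]
          simp [FreeGroup.invRev]
        rw [hmk, map_inv, FreeGroup.lift_apply_of]
        have hcoset : FreeGroup.mk ((i, false) :: L) = (FreeGroup.of i)⁻¹ * FreeGroup.mk L := by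
          rw [hsplit, hmk]
        have hz : (FreeGroup.of i) • (QuotientGroup.mk (FreeGroup.mk ((i, false) :: L)) : X)
            ∈ S := by
          rw [hsmul, hcoset, mul_inv_cancel_left]
          exact hLS
        have hzz : σ i ⟨_, haLS⟩ = ⟨_, hLS⟩ := by
          apply Subtype.ext
          rw [hσ i ⟨_, haLS⟩ hz, hsmul, hcoset, mul_inv_cancel_left]
        rw [← hzz, Equiv.Perm.inv_def, Equiv.symm_apply_apply]
        exact congrArg QuotientGroup.mk hcoset
  let pt : ↥S := ⟨QuotientGroup.mk 1, h1S⟩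
  let M := (MulAction.stabilizer (Equiv.Perm ↥S) pt).comap ρ
  have hxS : ∀ (x : FreeGroup α), x ∈ g :: T.toList → (QuotientGroup.mk x : X) ∈ S := by
    intro x hx
    have h := hsufS x hx x.toWord (by rw [List.mem_tails])
    rwa [FreeGroup.mk_toWord] at h
  have hfix : ∀ (x : FreeGroup α) (hx : x ∈ g :: T.toList),
      ρ x pt = ⟨QuotientGroup.mk x, hxS x hx⟩ := by
    intro x hx
    apply Subtype.ext
    have h := key x.toWord (fun t ht => hsufS x hx t ht)
    rwa [FreeGroup.mk_toWord] at h
  have hBM : B ≤ M := by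
    rw [← hT, Subgroup.closure_le]
    intro t ht
    have htB : t ∈ B := hT ▸ Subgroup.subset_closure ht
    show t ∈ M
    rw [Subgroup.mem_comap, MulAction.mem_stabilizer_iff, Equiv.Perm.smul_def,
      hfix t (List.mem_cons_of_mem _ (Finset.mem_toList.2 ht))]
    apply Subtype.ext
    show (QuotientGroup.mk t : X) = QuotientGroup.mk 1
    rw [QuotientGroup.eq]
    simpa using B.inv_mem htB
  have hgM : g ∉ M := by
    intro hmem
    rw [Subgroup.mem_comap, MulAction.mem_stabilizer_iff, Equiv.Perm.smul_def,
      hfix g (List.mem_cons_self)] at hmem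
    have := congrArg Subtype.val hmem
    simp only at this
    rw [QuotientGroup.eq] at this
    exact hg (by simpa using B.inv_mem this)
  have hker : ρ.ker ≤ M := by
    intro x hx
    rw [MonoidHom.mem_ker] at hx
    rw [Subgroup.mem_comap, hx]
    exact Subgroup.one_mem _
  have hkerfi : ρ.ker.FiniteIndex := by
    refine ⟨?_⟩
    rw [Subgroup.index_ker]
    exact Nat.card_ne_zero.2 ⟨⟨⟨1, Subgroup.one_mem _⟩⟩, inferInstance⟩
  refine ⟨M, hBM, ?_, hgM⟩
  exact ⟨ne_zero_of_dvd_ne_zero hkerfi.index_ne_zero (Subgroup.index_dvd_of_le hker)⟩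

theorem mySep_prod {α : Type*} (hF : MySep (FreeGroup α)) :
    MySep (FreeGroup α × Multiplicative ℤ) := by
  classical
  intro K hK g hg
  let π₁ : FreeGroup α × Multiplicative ℤ →* FreeGroup α := MonoidHom.fst _ _
  let π₂ : FreeGroup α × Multiplicative ℤ →* Multiplicative ℤ := MonoidHom.snd _ _
  have hπ₁surj : Function.Surjective π₁ := fun x => ⟨(x, 1), rfl⟩
  let φ₁ : ↥K →* FreeGroup α := π₁.comp K.subtype
  let B : Subgroup (FreeGroup α) := φ₁.range
  have hBfg : B.FG := by
    have hBeq : B = K.map π₁ := by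
      show (π₁.comp K.subtype).range = K.map π₁
      rw [MonoidHom.range_comp, Subgroup.range_subtype]
    rw [hBeq]
    exact hK.map' π₁
  by_cases hf : g.1 ∈ B
  case neg =>
    obtain ⟨M₀, hBM₀, hM₀fi, hfM₀⟩ := hF B hBfg g.1 hf
    refine ⟨M₀.comap π₁, ?_, ?_, ?_⟩
    · intro x hx
      rw [Subgroup.mem_comap]
      exact hBM₀ ⟨⟨x, hx⟩, rfl⟩
    · exact ⟨by rw [Subgroup.index_comap_of_surjective _ hπ₁surj]; exact hM₀fi.index_ne_zero⟩
    · intro hmem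
      exact hfM₀ (Subgroup.mem_comap.1 hmem)
  case pos =>
  obtain ⟨kf, hkf⟩ := hf
  let C' : AddSubgroup ℤ :=
    { carrier := {m : ℤ | ((1 : FreeGroup α), Multiplicative.ofAdd m) ∈ K}
      add_mem' := by
        intro a b ha hb
        have h := K.mul_mem ha hb
        simpa [Prod.mk_mul_mk, ← ofAdd_add] using h
      zero_mem' := by
        have h := K.one_mem
        exact h
      neg_mem' := by
        intro a ha
        have h := K.inv_mem ha
        simpa [← ofAdd_neg] using h }
  obtain ⟨aC, haC⟩ := Int.subgroup_cyclic C'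
  set mf : ℤ := Multiplicative.toAdd (π₂ ↑kf) with hmf
  set D : ℤ := Multiplicative.toAdd (π₂ g) - mf with hD
  have hDmem : ((1 : FreeGroup α), Multiplicative.ofAdd D) ∈ K → False := by
    intro hDK
    apply hg
    have hgprod : g = ↑kf * ((1 : FreeGroup α), Multiplicative.ofAdd D) := by
      have h2 : g.2 = (↑kf : FreeGroup α × Multiplicative ℤ).2 * Multiplicative.ofAdd D := by
        have : (↑kf : FreeGroup α × Multiplicative ℤ).2 = Multiplicative.ofAdd mf := rfl
        rw [this, ← ofAdd_add]
        have : mf + D = Multiplicative.toAdd (π₂ g) := by rw [hD]; ring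
        rw [this]
        rfl
      have h1 : g.1 = (↑kf : FreeGroup α × Multiplicative ℤ).1 * 1 := by
        rw [mul_one]
        exact hkf.symm
      exact Prod.ext h1 h2
    rw [hgprod]
    exact K.mul_mem kf.2 hDK
  have hD0 : D ≠ 0 := by
    intro h0
    apply hDmem
    rw [h0]
    exact K.one_mem
  let N : ℕ := if aC = 0 then D.natAbs + 1 else aC.natAbs
  have hN1 : 1 ≤ N := by
    by_cases h : aC = 0 <;> simp [N, h]
    omega
  have hND : ¬ ((N : ℤ) ∣ D) := by
    intro hdvd
    by_cases h : aC = 0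
    · rw [show N = D.natAbs + 1 from by simp [N, h]] at hdvd
      have h2 : ((D.natAbs + 1 : ℕ) : ℤ) ∣ (D.natAbs : ℤ) := Int.dvd_natAbs.2 hdvd
      have h3 : ((D.natAbs + 1 : ℕ) : ℤ) ≤ (D.natAbs : ℤ) :=
        Int.le_of_dvd (by exact_mod_cast Int.natAbs_pos.2 hD0) h2
      have h4 : (D.natAbs : ℤ) + 1 ≤ (D.natAbs : ℤ) := by push_cast at h3; omega
      omega
    · rw [show N = aC.natAbs from by simp [N, h]] at hdvd
      obtain ⟨t, ht⟩ := Int.natAbs_dvd.1 hdvd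
      apply hDmem
      show D ∈ C'
      rw [haC, AddSubgroup.mem_closure_singleton]
      exact ⟨t, by rw [smul_eq_mul, ht]; ring⟩
  have hCN : ∀ m ∈ C', (N : ℤ) ∣ m := by
    intro m hm
    rw [haC, AddSubgroup.mem_closure_singleton] at hm
    obtain ⟨t, ht⟩ := hm
    by_cases h : aC = 0
    · rw [← ht, h]
      simp
    · rw [show N = aC.natAbs from by simp [N, h], ← ht, smul_eq_mul]
      exact Dvd.dvd.mul_left (Int.natAbs_dvd.2 dvd_rfl) t
  haveI : NeZero N := ⟨by omega⟩
  let θ : Multiplicative ℤ →* Multiplicative (ZMod N) :=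
    AddMonoidHom.toMultiplicative (Int.castAddHom (ZMod N))
  have hθ : ∀ m : ℤ, θ (Multiplicative.ofAdd m) = Multiplicative.ofAdd ((m : ZMod N)) := by
    intro m
    rfl
  let κ : ↥K →* Multiplicative (ZMod N) := (θ.comp π₂).comp K.subtype
  have hker : φ₁.ker ≤ κ.ker := by
    intro k hk
    rw [MonoidHom.mem_ker] at hk ⊢
    have hkC : Multiplicative.toAdd ((↑k : FreeGroup α × Multiplicative ℤ).2) ∈ C' := by
      show ((1 : FreeGroup α),
        Multiplicative.ofAdd (Multiplicative.toAdd (↑k : FreeGroup α × Multiplicative ℤ).2)) ∈ K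
      have heq : ((1 : FreeGroup α),
          Multiplicative.ofAdd (Multiplicative.toAdd (↑k : FreeGroup α × Multiplicative ℤ).2))
          = (↑k : FreeGroup α × Multiplicative ℤ) := by
        apply Prod.ext
        · exact hk.symm
        · rfl
      rw [heq]
      exact k.2
    have hdvd := hCN _ hkC
    show θ ((↑k : FreeGroup α × Multiplicative ℤ).2) = 1
    rw [show (↑k : FreeGroup α × Multiplicative ℤ).2
      = Multiplicative.ofAdd (Multiplicative.toAdd (↑k : FreeGroup α × Multiplicative ℤ).2)
      from rfl, hθ]
    rw [show (1 : Multiplicative (ZMod N)) = Multiplicative.ofAdd (0 : ZMod N) from rfl]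
    congr 1
    exact (ZMod.intCast_zmod_eq_zero_iff_dvd _ _).2 hdvd
  let τ' := QuotientGroup.lift φ₁.ker κ hker
  let eB : ↥K ⧸ φ₁.ker ≃* ↥B := QuotientGroup.quotientKerEquivRange φ₁
  let τ : ↥B →* Multiplicative (ZMod N) := τ'.comp (eB.symm : ↥B ≃* (↥K ⧸ φ₁.ker)).toMonoidHom
  have hτ : ∀ k : ↥K, τ (⟨φ₁ k, ⟨k, rfl⟩⟩ : ↥B) = κ k := by
    intro k
    have h1 : eB (QuotientGroup.mk k) = (⟨φ₁ k, ⟨k, rfl⟩⟩ : ↥B) := by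
      apply Subtype.ext
      rfl
    show τ' (eB.symm (⟨φ₁ k, ⟨k, rfl⟩⟩ : ↥B)) = κ k
    rw [← h1, MulEquiv.symm_apply_apply]
    exact QuotientGroup.lift_mk' _ _ _
  haveI hBgfg : Group.FG ↥B := (Group.fg_iff_subgroup_fg B).2 hBfg
  haveI hτkerfi : τ.ker.FiniteIndex := by
    refine ⟨?_⟩
    rw [Subgroup.index_ker]
    exact Nat.card_ne_zero.2 ⟨⟨⟨1, Subgroup.one_mem _⟩⟩, inferInstance⟩
  have hτkerfg : τ.ker.FG := (Group.fg_iff_subgroup_fg τ.ker).1 inferInstance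
  let B₀ : Subgroup (FreeGroup α) := τ.ker.map B.subtype
  have hB₀fg : B₀.FG := hτkerfg.map' _
  have hsep : ∀ q : ↥B ⧸ τ.ker, ∃ Mq : Subgroup (FreeGroup α), B₀ ≤ Mq ∧ Mq.FiniteIndex ∧
      (τ q.out ≠ 1 → (↑(q.out) : FreeGroup α) ∉ Mq) := by
    intro q
    by_cases hq : τ q.out = 1
    · exact ⟨⊤, le_top, inferInstance, fun hcon => absurd hq hcon⟩
    · have hnot : (↑(q.out) : FreeGroup α) ∉ B₀ := by
        intro hmem
        obtain ⟨y, hy, hyv⟩ := Subgroup.mem_map.1 hmem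
        rw [show y = q.out from Subtype.ext hyv] at hy
        exact hq (MonoidHom.mem_ker.1 hy)
      obtain ⟨Mq, h1, h2, h3⟩ := hF B₀ hB₀fg _ hnot
      exact ⟨Mq, h1, h2, fun _ => h3⟩
  choose Mq hM1 hM2 hM3 using hsep
  let M₁ : Subgroup (FreeGroup α) := ⨅ q, Mq q
  haveI hM₁fi : M₁.FiniteIndex := Subgroup.finiteIndex_iInf hM2
  let L : Subgroup (FreeGroup α) := M₁.normalCore
  haveI hLfi : L.FiniteIndex := inferInstance
  haveI hLnormal : L.Normal := Subgroup.normalCore_normal _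
  have hB₀M₁ : B₀ ≤ M₁ := le_iInf hM1
  have hLM₁ : L ≤ M₁ := Subgroup.normalCore_le _
  have hBL : ∀ b : ↥B, (↑b : FreeGroup α) ∈ L → b ∈ τ.ker := by
    intro b hb
    set q : ↥B ⧸ τ.ker := QuotientGroup.mk b with hq
    have hout : (q.out)⁻¹ * b ∈ τ.ker := QuotientGroup.eq.1 (QuotientGroup.out_eq' q)
    by_cases hq1 : τ q.out = 1
    · rw [MonoidHom.mem_ker]
      have hsplit : τ b = τ q.out * τ ((q.out)⁻¹ * b) := by
        rw [← map_mul]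
        congr 1
        group
      rw [hsplit, hq1, MonoidHom.mem_ker.1 hout, one_mul]
    · exfalso
      apply hM3 q hq1
      have h1 : (↑b : FreeGroup α) ∈ Mq q := (hLM₁.trans (iInf_le Mq q)) hb
      have h2 : (↑(b⁻¹ * q.out) : FreeGroup α) ∈ B₀ := by
        have h3 := τ.ker.inv_mem hout
        rw [mul_inv_rev, inv_inv] at h3
        exact ⟨b⁻¹ * q.out, h3, rfl⟩
      have hsplit : (↑(q.out) : FreeGroup α) = ↑b * ↑(b⁻¹ * q.out) := by
        push_cast
        rw [mul_inv_cancel_left]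
      rw [hsplit]
      exact (Mq q).mul_mem h1 (hM1 q h2)
  let W : Subgroup (FreeGroup α × Multiplicative ℤ) := L.comap π₁ ⊓ (θ.comp π₂).ker
  haveI hWnormal : W.Normal := by
    have n1 : (L.comap π₁).Normal := hLnormal.comap π₁
    have n2 : ((θ.comp π₂).ker).Normal := MonoidHom.normal_ker _
    constructor
    intro x hx gg
    rcases Subgroup.mem_inf.1 hx with ⟨hx1, hx2⟩
    exact Subgroup.mem_inf.2 ⟨n1.conj_mem _ hx1 gg, n2.conj_mem _ hx2 gg⟩
  haveI hW1fi : (L.comap π₁).FiniteIndex :=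
    ⟨by rw [Subgroup.index_comap_of_surjective _ hπ₁surj]; exact hLfi.index_ne_zero⟩
  haveI hW2fi : ((θ.comp π₂).ker).FiniteIndex := by
    refine ⟨?_⟩
    rw [Subgroup.index_ker]
    exact Nat.card_ne_zero.2 ⟨⟨⟨1, Subgroup.one_mem _⟩⟩, inferInstance⟩
  have hWfi : W.FiniteIndex := inferInstance
  refine ⟨K ⊔ W, le_sup_left, ?_, ?_⟩
  · exact ⟨ne_zero_of_dvd_ne_zero hWfi.index_ne_zero (Subgroup.index_dvd_of_le le_sup_right)⟩
  · intro hmem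
    rw [← SetLike.mem_coe, Subgroup.mul_normal K W] at hmem
    obtain ⟨k, hkK, w, hwW, hkw⟩ := hmem
    rcases Subgroup.mem_inf.1 hwW with ⟨hwL, hwθ⟩
    let kk : ↥K := ⟨k, hkK⟩
    let bB : ↥B := ⟨φ₁ kk, ⟨kk, rfl⟩⟩
    let fB : ↥B := ⟨φ₁ kf, ⟨kf, rfl⟩⟩
    have hb : (↑(bB⁻¹ * fB) : FreeGroup α) ∈ L := by
      have hg1 : g.1 = k.1 * w.1 := by rw [← hkw]; rfl
      show (φ₁ kk)⁻¹ * (φ₁ kf) ∈ L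
      rw [hkf, hg1, show φ₁ kk = k.1 from rfl, inv_mul_cancel_left]
      exact Subgroup.mem_comap.1 hwL
    have hkerb : bB⁻¹ * fB ∈ τ.ker := hBL _ hb
    have hττ : τ bB = τ fB := by
      have h5 := MonoidHom.mem_ker.1 hkerb
      rw [map_mul, map_inv] at h5
      exact (inv_mul_eq_one.1 h5)
    have h3 : θ (π₂ g) = κ kk := by
      have hsplit : π₂ g = π₂ k * π₂ w := by rw [← hkw]; rfl
      rw [hsplit, map_mul]
      have hw1 : θ (π₂ w) = 1 := MonoidHom.mem_ker.1 hwθ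
      rw [hw1, mul_one]
      rfl
    have h4 : θ (π₂ g) = θ (π₂ ↑kf) := by
      rw [h3, ← hτ kk, hττ, hτ kf]
      rfl
    apply hND
    have h6 : ((Multiplicative.toAdd (π₂ g) : ℤ) : ZMod N) = ((mf : ℤ) : ZMod N) := by
      have h7 := h4
      rw [show π₂ g = Multiplicative.ofAdd (Multiplicative.toAdd (π₂ g)) from rfl, hθ] at h7
      rw [show π₂ (↑kf : FreeGroup α × Multiplicative ℤ)
        = Multiplicative.ofAdd mf from rfl, hθ] at h7
      exact Multiplicative.ofAdd.injective h7
    have h8 : (D : ZMod N) = 0 := by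
      rw [hD]
      push_cast
      rw [h6]
      ring
    exact (ZMod.intCast_zmod_eq_zero_iff_dvd _ _).1 h8

theorem mySep_mappingTorus (n : ℕ) (φ : MulAut (FreeGroup (Fin n)))
    (k : ℕ) (hk : 1 ≤ k) (w : FreeGroup (Fin n)) (hw : ∀ g, (φ ^ k) g = w * g * w⁻¹)
    (hprod : MySep (FreeGroup (Fin n) × Multiplicative ℤ))
    (hext : ∀ (G : Type) [Group G] (H : Subgroup G), H.FiniteIndex → MySep ↥H → MySep G)
    (hequiv : ∀ (A B : Type) [Group A] [Group B], (A ≃* B) → MySep A → MySep B) :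
    MySep (SemidirectProduct (FreeGroup (Fin n)) (Multiplicative ℤ)
      (zpowersHom (MulAut (FreeGroup (Fin n))) φ)) := by
  classical
  set φ' := zpowersHom (MulAut (FreeGroup (Fin n))) φ with hφ'
  set G₀ := SemidirectProduct (FreeGroup (Fin n)) (Multiplicative ℤ) φ' with hG₀
  haveI : NeZero k := ⟨by omega⟩
  have hkz : (k : ℤ) ≠ 0 := by exact_mod_cast (show k ≠ 0 by omega)
  let θk : Multiplicative ℤ →* Multiplicative (ZMod k) :=
    AddMonoidHom.toMultiplicative (Int.castAddHom (ZMod k))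
  have hθk : ∀ m : ℤ, θk (Multiplicative.ofAdd m) = Multiplicative.ofAdd ((m : ZMod k)) :=
    fun m => rfl
  let H : Subgroup G₀ := (θk.comp SemidirectProduct.rightHom).ker
  have hHfi : H.FiniteIndex := by
    refine ⟨?_⟩
    rw [Subgroup.index_ker]
    exact Nat.card_ne_zero.2 ⟨⟨⟨1, Subgroup.one_mem _⟩⟩, inferInstance⟩
  let z : G₀ :=
    SemidirectProduct.inl w⁻¹ * SemidirectProduct.inr (Multiplicative.ofAdd (k : ℤ))
  have hφ'k : ∀ x : FreeGroup (Fin n),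
      φ' (Multiplicative.ofAdd (k : ℤ)) x = w * x * w⁻¹ := by
    intro x
    rw [hφ', zpowersHom_apply]
    have h0 : Multiplicative.toAdd (Multiplicative.ofAdd (k : ℤ)) = (k : ℤ) := rfl
    rw [h0, zpow_natCast]
    exact hw x
  have hzcomm : ∀ x : FreeGroup (Fin n), Commute (SemidirectProduct.inl x) z := by
    intro x
    have haut : (SemidirectProduct.inr (Multiplicative.ofAdd (k : ℤ))
          * SemidirectProduct.inl x : G₀)
        = SemidirectProduct.inl (w * x * w⁻¹)
          * SemidirectProduct.inr (Multiplicative.ofAdd (k : ℤ)) := by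
      have h1 := SemidirectProduct.inl_aut (φ := φ') (Multiplicative.ofAdd (k : ℤ)) x
      rw [hφ'k x] at h1
      rw [h1, mul_assoc, mul_assoc, ← map_mul, inv_mul_cancel, map_one, mul_one]
    have hL : SemidirectProduct.inl x * z
        = SemidirectProduct.inl (x * w⁻¹)
          * SemidirectProduct.inr (Multiplicative.ofAdd (k : ℤ)) := by
      show SemidirectProduct.inl x * (SemidirectProduct.inl w⁻¹
        * SemidirectProduct.inr (Multiplicative.ofAdd (k : ℤ))) = _
      rw [← mul_assoc, ← map_mul]
    have hR : z * SemidirectProduct.inl x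
        = SemidirectProduct.inl (w⁻¹ * (w * x * w⁻¹))
          * SemidirectProduct.inr (Multiplicative.ofAdd (k : ℤ)) := by
      show SemidirectProduct.inl w⁻¹ * SemidirectProduct.inr (Multiplicative.ofAdd (k : ℤ))
        * SemidirectProduct.inl x = _
      rw [mul_assoc, haut, ← mul_assoc, ← map_mul]
    show SemidirectProduct.inl x * z = z * SemidirectProduct.inl x
    rw [hL, hR]
    have hxw : x * w⁻¹ = w⁻¹ * (w * x * w⁻¹) := by group
    rw [hxw]
  let ψ : FreeGroup (Fin n) × Multiplicative ℤ →* G₀ :=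
    MonoidHom.noncommCoprod SemidirectProduct.inl (zpowersHom G₀ z)
      (fun x y => by
        rw [zpowersHom_apply]
        exact (hzcomm x).zpow_right _)
  have hψ : ∀ (x : FreeGroup (Fin n)) (c : Multiplicative ℤ),
      ψ (x, c) = SemidirectProduct.inl x * z ^ (Multiplicative.toAdd c) := fun x c => rfl
  have hzr : ∀ m : ℤ, SemidirectProduct.rightHom (z ^ m) = Multiplicative.ofAdd (m * k) := by
    intro m
    rw [map_zpow]
    have h1 : SemidirectProduct.rightHom z = Multiplicative.ofAdd (k : ℤ) := by
      show SemidirectProduct.rightHom (SemidirectProduct.inl w⁻¹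
        * SemidirectProduct.inr (Multiplicative.ofAdd (k : ℤ))) = _
      rw [map_mul, SemidirectProduct.rightHom_inl, SemidirectProduct.rightHom_inr, one_mul]
    rw [h1, ← ofAdd_zsmul]
    congr 1
  have hψr : ∀ (x : FreeGroup (Fin n)) (c : Multiplicative ℤ),
      SemidirectProduct.rightHom (ψ (x, c))
        = Multiplicative.ofAdd (Multiplicative.toAdd c * k) := by
    intro x c
    rw [hψ, map_mul, SemidirectProduct.rightHom_inl, one_mul, hzr]
  have hinj : Function.Injective ψ := by
    rw [injective_iff_map_eq_one]
    rintro ⟨x, c⟩ h1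
    have h2 := hψr x c
    rw [h1, map_one] at h2
    have h3 : Multiplicative.toAdd c * (k : ℤ) = 0 :=
      (congrArg Multiplicative.toAdd h2).symm
    have hc : c = 1 := by
      rcases mul_eq_zero.1 h3 with h | h
      · have := congrArg Multiplicative.ofAdd h
        simpa using this
      · exact absurd h hkz
    rw [hc] at h1
    rw [hψ] at h1
    simp only [toAdd_one, zpow_zero, mul_one] at h1
    have hx : x = 1 := SemidirectProduct.inl_injective h1
    exact Prod.ext hx hc
  have hrange : ψ.range = H := by
    apply le_antisymm
    · rintro u ⟨⟨x, c⟩, rfl⟩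
      show (θk.comp SemidirectProduct.rightHom) (ψ (x, c)) = 1
      rw [MonoidHom.comp_apply, hψr, hθk]
      have hcast : ((Multiplicative.toAdd c * (k : ℤ) : ℤ) : ZMod k) = 0 :=
        (ZMod.intCast_zmod_eq_zero_iff_dvd _ k).2 (dvd_mul_left _ _)
      rw [hcast]
      rfl
    · intro u hu
      have hdvd : (k : ℤ) ∣ Multiplicative.toAdd (SemidirectProduct.rightHom u) := by
        have h1 : θk (SemidirectProduct.rightHom u) = 1 := hu
        rw [show SemidirectProduct.rightHom u
          = Multiplicative.ofAdd (Multiplicative.toAdd (SemidirectProduct.rightHom u))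
          from rfl, hθk] at h1
        have h2 : ((Multiplicative.toAdd (SemidirectProduct.rightHom u) : ℤ) : ZMod k) = 0 :=
          congrArg Multiplicative.toAdd h1
        exact (ZMod.intCast_zmod_eq_zero_iff_dvd _ _).1 h2
      set m : ℤ := Multiplicative.toAdd (SemidirectProduct.rightHom u) / k with hm
      have hmk : m * k = Multiplicative.toAdd (SemidirectProduct.rightHom u) := by
        rw [hm]
        exact Int.ediv_mul_cancel hdvd
      refine ⟨(u.left * ((z ^ m).left)⁻¹, Multiplicative.ofAdd m), ?_⟩
      rw [hψ]
      have htoAdd : Multiplicative.toAdd (Multiplicative.ofAdd m) = m := rfl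
      rw [htoAdd]
      apply SemidirectProduct.ext
      · rw [SemidirectProduct.mul_left, SemidirectProduct.left_inl,
          SemidirectProduct.right_inl, map_one]
        show u.left * ((z ^ m).left)⁻¹ * (z ^ m).left = u.left
        rw [inv_mul_cancel_right]
      · rw [SemidirectProduct.mul_right, SemidirectProduct.right_inl, one_mul]
        have h1 : (z ^ m).right = SemidirectProduct.rightHom (z ^ m) := rfl
        have h2 : u.right = SemidirectProduct.rightHom u := rfl
        rw [h1, h2, hzr, hmk]
        rfl
  let e : (FreeGroup (Fin n) × Multiplicative ℤ) ≃* ↥H :=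
    (MonoidHom.ofInjective hinj).trans (MulEquiv.subgroupCongr hrange)
  exact hext G₀ H hHfi (hequiv _ _ e hprod)

/-- If `φ` has finite order in `Out(F_n)`, then the mapping torus `F_n ⋊_φ ℤ` is subgroup
separable. -/
theorem mappingTorus_subgroupSeparable_of_finiteOrder (n : ℕ) (hn : 1 ≤ n)
    (φ : MulAut (FreeGroup (Fin n)))
    (h : ∃ k : ℕ, 1 ≤ k ∧ ∃ w : FreeGroup (Fin n), ∀ g, (φ ^ k) g = w * g * w⁻¹) :
    SubgroupSeparable (MappingTorus n φ) := by
  obtain ⟨k, hk, w, hw⟩ := h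
  have h1 := mySep_mappingTorus n φ k hk w hw (mySep_prod mySep_freeGroup)
    (fun G _ H hfi hsep => mySep_of_finiteIndex H (hH := hsep))
    (fun A B _ _ e hA => mySep_of_mulEquiv e hA)
  exact mySep_iff.1 h1
end

section
/- Let n ≥ 1 and let φ be an automorphism of the free group F_n that grows polynomially of degree d. Then d = 0 if and only if φ has finite order in Out(F_n), i.e. φ^k is an inner automorphism of F_n for some k ≥ 1. -/
open scoped Classical

set_option linter.unusedSectionVars false
set_option maxHeartbeats 1000000

namespace PGAux

open FreeGroup List

variable {α : Type*} [DecidableEq α]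

/-- inverse of a single letter -/
def invPair (p : α × Bool) : α × Bool := (p.1, !p.2)

@[simp] lemma invPair_invPair (p : α × Bool) : invPair (invPair p) = p := by
  simp [invPair]

@[simp] lemma invPair_fst (p : α × Bool) : (invPair p).1 = p.1 := rfl

/-- two adjacent letters cancel -/
def Cancels (p q : α × Bool) : Prop := p.1 = q.1 ∧ p.2 = !q.2

lemma cancels_comm {p q : α × Bool} : Cancels p q ↔ Cancels q p := by
  unfold Cancels
  constructor <;> rintro ⟨h1, h2⟩ <;> exact ⟨h1.symm, by simp [h2]⟩

lemma not_cancels_self (p : α × Bool) : ¬ Cancels p p := by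
  rintro ⟨-, h⟩; simp at h

lemma cancels_invPair_right (p : α × Bool) : Cancels p (invPair p) := ⟨rfl, by simp [invPair]⟩

lemma cancels_iff_eq_invPair {p q : α × Bool} : Cancels p q ↔ q = invPair p := by
  constructor
  · rintro ⟨h1, h2⟩
    have h3 : q.2 = !p.2 := by simp [h2]
    cases q; cases p; simp_all [invPair]
  · rintro rfl; exact ⟨rfl, by simp [invPair]⟩

lemma cancels_invPair_iff {p q : α × Bool} : Cancels p (invPair q) ↔ p = q := by
  rw [cancels_iff_eq_invPair]
  constructor
  · intro h; have := congrArg invPair h; simpa using this.symm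
  · rintro rfl; simp

/-- a reduced word -/
def Reduced (L : List (α × Bool)) : Prop := List.Chain' (fun p q => ¬ Cancels p q) L

@[simp] lemma reduced_nil : Reduced ([] : List (α × Bool)) := List.isChain_nil

@[simp] lemma reduced_singleton (p : α × Bool) : Reduced [p] := List.isChain_singleton p

lemma Reduced.tail {p : α × Bool} {L : List (α × Bool)} (h : Reduced (p :: L)) : Reduced L :=
  (List.isChain_cons.1 h).2

lemma reduced_cons {p : α × Bool} {L : List (α × Bool)} :
    Reduced (p :: L) ↔ (∀ q ∈ L.head?, ¬ Cancels p q) ∧ Reduced L := List.isChain_cons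

lemma reduced_append {L₁ L₂ : List (α × Bool)} :
    Reduced (L₁ ++ L₂) ↔ Reduced L₁ ∧ Reduced L₂ ∧
      ∀ p ∈ L₁.getLast?, ∀ q ∈ L₂.head?, ¬ Cancels p q := List.isChain_append

/-- `Reduced` matches `FreeGroup.reduce`. -/
lemma reduce_eq_self_of_reduced : ∀ {L : List (α × Bool)}, Reduced L → reduce L = L := by
  intro L
  induction L with
  | nil => intro _; rfl
  | cons p T ih =>
    intro h
    have hT : reduce T = T := ih h.tail
    rw [reduce.cons, hT]
    cases T with
    | nil => rfl
    | cons q T' =>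
      have hpq : ¬ Cancels p q := (reduced_cons.1 h).1 q rfl
      show (if p.1 = q.1 ∧ p.2 = !q.2 then T' else p :: q :: T') = p :: q :: T'
      rw [if_neg]
      exact fun hc => hpq ⟨hc.1, hc.2⟩

lemma reduced_of_reduce_eq_self : ∀ {L : List (α × Bool)}, reduce L = L → Reduced L := by
  intro L
  induction L with
  | nil => intro _; exact reduced_nil
  | cons p T ih =>
    intro h
    have hred : Red T (reduce T) := reduce.red
    have hlen : (reduce T).length ≤ T.length := Red.length_le hred
    rw [reduce.cons] at h
    rcases hrt : reduce T with _ | ⟨q, T'⟩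
    · rw [hrt] at h
      simp at h
      rw [h] at hrt ⊢
      exact reduced_singleton p
    · rw [hrt] at h hlen
      have h' : (if p.1 = q.1 ∧ p.2 = !q.2 then T' else p :: q :: T') = p :: T := h
      by_cases hc : p.1 = q.1 ∧ p.2 = !q.2
      · rw [if_pos hc] at h'
        exfalso
        have hlt : T'.length < T.length + 1 := by
          simp at hlen; omega
        rw [h'] at hlt
        simp at hlt
      · rw [if_neg hc] at h'
        have hT : T = q :: T' := by
          injection h' with h1 h2
          exact h2.symm
        have hfix : reduce T = T := by rw [hrt, hT]
        have hRT := ih hfix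
        rw [hT] at hRT
        rw [hT]
        refine reduced_cons.2 ⟨?_, hRT⟩
        intro r hr
        simp at hr
        subst hr
        exact fun hcc => hc ⟨hcc.1, hcc.2⟩

lemma reduced_toWord (x : FreeGroup α) : Reduced x.toWord :=
  reduced_of_reduce_eq_self (reduce_toWord x)

lemma toWord_mk_reduced {L : List (α × Bool)} (h : Reduced L) : (mk L).toWord = L := by
  rw [toWord_mk, reduce_eq_self_of_reduced h]

/-- invRev basics -/
lemma invRev_eq (L : List (α × Bool)) : invRev L = (L.map invPair).reverse := rfl

@[simp] lemma invRev_cons (p : α × Bool) (L : List (α × Bool)) :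
    invRev (p :: L) = invRev L ++ [invPair p] := by
  simp [invRev_eq]

@[simp] lemma invRev_nil : invRev ([] : List (α × Bool)) = [] := rfl

lemma head?_invRev (L : List (α × Bool)) : (invRev L).head? = L.getLast?.map invPair := by
  simp [invRev_eq, List.head?_reverse]

lemma getLast?_invRev (L : List (α × Bool)) : (invRev L).getLast? = L.head?.map invPair := by
  simp [invRev_eq, List.getLast?_reverse]

lemma reduced_invRev {L : List (α × Bool)} (h : Reduced L) : Reduced (invRev L) := by
  rw [Reduced, List.Chain', invRev_eq, List.isChain_reverse]
  rw [List.isChain_map]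
  refine List.IsChain.imp ?_ h
  intro p q hpq
  intro hc
  apply hpq
  rcases hc with ⟨h1, h2⟩
  refine ⟨h1.symm, ?_⟩
  simp [invPair] at h1 h2 ⊢
  simp [h2]

lemma cancels_invPair_invPair {p q : α × Bool} :
    Cancels (invPair p) (invPair q) ↔ Cancels p q := by
  rw [cancels_iff_eq_invPair, cancels_iff_eq_invPair]
  rw [invPair_invPair]
  constructor
  · intro h
    have := congrArg invPair h
    rw [invPair_invPair] at this
    exact this
  · rintro rfl; simp

lemma head?_append_left {β : Type*} {l₁ l₂ : List β} (h : l₁ ≠ []) :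
    (l₁ ++ l₂).head? = l₁.head? := by
  cases l₁ with
  | nil => simp at h
  | cons x t => simp

lemma getLast?_cons_ne_nil {β : Type*} {x : β} {l : List β} (h : l ≠ []) :
    (x :: l).getLast? = l.getLast? := by
  cases l with
  | nil => simp at h
  | cons y t => simp [List.getLast?_cons_cons]

/-- a cyclically reduced word -/
def CycReduced (L : List (α × Bool)) : Prop :=
  Reduced L ∧ ∀ p ∈ L.getLast?, ∀ q ∈ L.head?, ¬ Cancels p q

lemma mk_cons_invPair_cons (a : α × Bool) (L : List (α × Bool)) :
    mk (a :: invPair a :: L) = mk L := by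
  have h : Red.Step (a :: invPair a :: L) L := by
    have := @FreeGroup.Red.Step.cons_not α L a.1 a.2
    simpa [invPair] using this
  exact Quot.sound h

lemma mk_append_cancel (X : List (α × Bool)) (a : α × Bool) :
    mk (X ++ [a, invPair a]) = mk X := by
  have h : Red.Step (X ++ (a.1, a.2) :: (a.1, !a.2) :: []) (X ++ []) := Red.Step.not
  have h2 : ((a.1, a.2) : α × Bool) = a := rfl
  have h' : Red.Step (X ++ [a, invPair a]) X := by simpa [invPair, h2] using h
  exact Quot.sound h'

lemma invRev_singleton (a : α × Bool) : invRev [a] = [invPair a] := by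
  simp [invRev_eq, invPair]

lemma inv_mk_singleton (a : α × Bool) : (mk [a])⁻¹ = mk [invPair a] := by
  rw [FreeGroup.inv_mk, invRev_singleton]

/-- Rotation to the left: conjugating a cyclically reduced word starting with `a⁻¹`. -/
lemma rotate_left (a : α × Bool) (u₀ : List (α × Bool)) (hu : CycReduced (invPair a :: u₀)) :
    CycReduced (u₀ ++ [invPair a]) ∧
    mk ([a] ++ (invPair a :: u₀) ++ [invPair a]) = mk (u₀ ++ [invPair a]) := by
  refine ⟨⟨?_, ?_⟩, ?_⟩
  · refine reduced_append.2 ⟨hu.1.tail, reduced_singleton _, ?_⟩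
    intro p hp q hq
    simp at hq; subst hq
    have h0 : u₀ ≠ [] := by rintro rfl; simp at hp
    refine hu.2 p ?_ (invPair a) (by simp)
    rw [getLast?_cons_ne_nil h0]; exact hp
  · intro p hp q hq
    have hp' : invPair a = p := by simpa using hp
    subst hp'
    cases u₀ with
    | nil =>
      have hq' : invPair a = q := by simpa using hq
      subst hq'; exact not_cancels_self _
    | cons x l =>
      have hq' : x = q := by
        rw [head?_append_left (by simp)] at hq
        simpa using hq
      exact hq' ▸ (reduced_cons.1 hu.1).1 x (by simp)
  · have hw : ([a] ++ (invPair a :: u₀) ++ [invPair a])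
        = a :: invPair a :: (u₀ ++ [invPair a]) := by simp
    rw [hw, mk_cons_invPair_cons]

/-- Rotation to the right: conjugating a cyclically reduced word ending with `a`. -/
lemma rotate_right (a : α × Bool) (u₁ : List (α × Bool)) (hu : CycReduced (u₁ ++ [a]))
    (hhead : ∀ q ∈ (u₁ ++ [a]).head?, ¬ Cancels a q) :
    CycReduced (a :: u₁) ∧
    mk ([a] ++ (u₁ ++ [a]) ++ [invPair a]) = mk (a :: u₁) := by
  refine ⟨⟨?_, ?_⟩, ?_⟩
  · refine reduced_cons.2 ⟨?_, (reduced_append.1 hu.1).1⟩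
    intro q hq
    refine hhead q ?_
    rw [head?_append_left (by rintro rfl; simp at hq)]
    exact hq
  · intro p hp q hq
    have hq' : a = q := by simpa using hq
    subst hq'
    cases u₁ with
    | nil =>
      have hp' : a = p := by simpa using hp
      subst hp'; exact not_cancels_self _
    | cons x l =>
      rw [getLast?_cons_ne_nil (by simp)] at hp
      exact (reduced_append.1 hu.1).2.2 p hp a (by simp)
  · have hw : ([a] ++ (u₁ ++ [a]) ++ [invPair a]) = (a :: u₁) ++ [a, invPair a] := by simp
    rw [hw, mk_append_cancel]

/-- No cancellation: conjugating by a letter that doesn't touch either end. -/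
lemma conj_nocancel (a : α × Bool) (u : List (α × Bool)) (hu : Reduced u) (hne : u ≠ [])
    (hhead : ∀ q ∈ u.head?, ¬ Cancels a q)
    (hlast : ∀ p ∈ u.getLast?, ¬ Cancels p (invPair a)) :
    Reduced ([a] ++ u ++ invRev [a]) := by
  rw [invRev_singleton]
  refine reduced_append.2 ⟨?_, reduced_singleton _, ?_⟩
  · refine reduced_append.2 ⟨reduced_singleton _, hu, ?_⟩
    intro p hp q hq
    have hp' : a = p := by simpa using hp
    subst hp'
    exact hhead q hq
  · intro p hp q hq
    have hq' : invPair a = q := by simpa using hq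
    subst hq'
    rw [List.getLast?_append_of_ne_nil _ hne] at hp
    exact hlast p hp

/-- Shrinking: the conjugator's first letter is cancelled. -/
lemma conj_shrink (a : α × Bool) (c₀ u : List (α × Bool))
    (hr : Reduced ((invPair a :: c₀) ++ u ++ invRev (invPair a :: c₀))) :
    Reduced (c₀ ++ u ++ invRev c₀) ∧
    mk ([a] ++ ((invPair a :: c₀) ++ u ++ invRev (invPair a :: c₀)) ++ [invPair a])
      = mk (c₀ ++ u ++ invRev c₀) := by
  have hshape : ((invPair a :: c₀) ++ u ++ invRev (invPair a :: c₀))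
      = invPair a :: ((c₀ ++ u ++ invRev c₀) ++ [a]) := by
    simp [invRev_cons, List.append_assoc]
  constructor
  · rw [hshape] at hr
    have h2 := hr.tail
    exact (reduced_append.1 h2).1
  · have hw : ([a] ++ ((invPair a :: c₀) ++ u ++ invRev (invPair a :: c₀)) ++ [invPair a])
        = a :: invPair a :: ((c₀ ++ u ++ invRev c₀) ++ [a, invPair a]) := by
      simp [invRev_cons, List.append_assoc]
    rw [hw, mk_cons_invPair_cons, mk_append_cancel]

/-- Growing: the conjugator gets longer by one letter. -/
lemma conj_grow (a d : α × Bool) (c₀ u : List (α × Bool)) (hnc : ¬ Cancels a d)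
    (hr : Reduced ((d :: c₀) ++ u ++ invRev (d :: c₀))) :
    Reduced ((a :: d :: c₀) ++ u ++ invRev (a :: d :: c₀)) ∧
    ([a] ++ ((d :: c₀) ++ u ++ invRev (d :: c₀)) ++ [invPair a])
      = ((a :: d :: c₀) ++ u ++ invRev (a :: d :: c₀)) := by
  constructor
  · have hshape : ((a :: d :: c₀) ++ u ++ invRev (a :: d :: c₀))
        = a :: (((d :: c₀) ++ u ++ invRev (d :: c₀)) ++ [invPair a]) := by
      simp [invRev_cons, List.append_assoc]
    rw [hshape]
    refine reduced_cons.2 ⟨?_, ?_⟩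
    · intro q hq
      have hq' : d = q := by
        rw [head?_append_left (by simp), head?_append_left (by simp)] at hq
        simpa using hq
      exact hq' ▸ hnc
    · refine reduced_append.2 ⟨hr, reduced_singleton _, ?_⟩
      intro p hp q hq
      have hq' : invPair a = q := by simpa using hq
      subst hq'
      have hlast : ((d :: c₀) ++ u ++ invRev (d :: c₀)).getLast? = some (invPair d) := by
        rw [List.getLast?_append_of_ne_nil _ (by simp [invRev_cons])]
        rw [invRev_cons, List.getLast?_concat]
      rw [hlast] at hp
      have hp' : invPair d = p := by simpa using hp
      subst hp'
      rw [cancels_invPair_invPair]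
      intro hc
      exact hnc (cancels_comm.1 hc)
  · simp [invRev_cons, List.append_assoc]

/-- Conjugating a `c · u · c⁻¹` normal form by a single letter. -/
lemma conj_letter (a : α × Bool) (c u : List (α × Bool)) (hu : CycReduced u) (hne : u ≠ [])
    (hr : Reduced (c ++ u ++ invRev c)) :
    ∃ c' u', CycReduced u' ∧ u' ≠ [] ∧ u'.length = u.length ∧
      Reduced (c' ++ u' ++ invRev c') ∧
      mk [a] * mk (c ++ u ++ invRev c) * (mk [a])⁻¹ = mk (c' ++ u' ++ invRev c') := by
  have hLHS : mk [a] * mk (c ++ u ++ invRev c) * (mk [a])⁻¹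
      = mk ([a] ++ (c ++ u ++ invRev c) ++ [invPair a]) := by
    rw [inv_mk_singleton, FreeGroup.mul_mk, FreeGroup.mul_mk]
  rcases c with _ | ⟨d, c₀⟩
  · -- empty conjugator
    have hshape : (([] : List (α × Bool)) ++ u ++ invRev []) = u := by simp
    rw [hshape] at hLHS
    by_cases h1 : ∀ q ∈ u.head?, ¬ Cancels a q
    · by_cases h2 : ∀ p ∈ u.getLast?, ¬ Cancels p (invPair a)
      · -- no cancellation
        refine ⟨[a], u, hu, hne, rfl, ?_, ?_⟩
        · exact conj_nocancel a u hu.1 hne h1 h2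
        · rw [hshape, hLHS, invRev_singleton]
      · -- rotation to the right
        push_neg at h2
        obtain ⟨p, hp, hpc⟩ := h2
        have hpa : p = a := cancels_invPair_iff.1 hpc
        subst hpa
        obtain ⟨u₁, hu₁⟩ : ∃ u₁, u = u₁ ++ [p] := by
          obtain h | ⟨L, b, hb⟩ := u.eq_nil_or_concat
          · exact absurd h hne
          · rw [List.concat_eq_append] at hb
            refine ⟨L, ?_⟩
            rw [hb] at hp ⊢
            rw [List.getLast?_concat] at hp
            have : b = p := by simpa using hp
            rw [this]
        subst hu₁
        obtain ⟨hcyc, hmk⟩ := rotate_right p u₁ hu h1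
        refine ⟨[], p :: u₁, hcyc, by simp, by simp, by simpa using hcyc.1, ?_⟩
        rw [hshape, hLHS]
        simpa using hmk
    · -- rotation to the left
      push_neg at h1
      obtain ⟨q, hq, hqc⟩ := h1
      have hqa : q = invPair a := cancels_iff_eq_invPair.1 hqc
      subst hqa
      obtain ⟨u₀, hu₀⟩ : ∃ u₀, u = invPair a :: u₀ := by
        cases u with
        | nil => simp at hq
        | cons x t =>
          have hx : x = invPair a := by simpa using hq
          exact ⟨t, by rw [hx]⟩
      subst hu₀
      obtain ⟨hcyc, hmk⟩ := rotate_left a u₀ hu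
      refine ⟨[], u₀ ++ [invPair a], hcyc, by simp, by simp, by simpa using hcyc.1, ?_⟩
      rw [hshape, hLHS]
      simpa using hmk
  · -- nonempty conjugator
    by_cases h1 : Cancels a d
    · have hd : d = invPair a := cancels_iff_eq_invPair.1 h1
      subst hd
      obtain ⟨hred, hmk⟩ := conj_shrink a c₀ u hr
      refine ⟨c₀, u, hu, hne, rfl, hred, ?_⟩
      rw [hLHS]
      exact hmk
    · obtain ⟨hred, hw⟩ := conj_grow a d c₀ u h1 hr
      refine ⟨a :: d :: c₀, u, hu, hne, rfl, hred, ?_⟩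
      rw [hLHS, hw]

/-- Conjugating a normal form by an arbitrary word. -/
lemma conj_word (L : List (α × Bool)) : ∀ (c u : List (α × Bool)), CycReduced u → u ≠ [] →
    Reduced (c ++ u ++ invRev c) →
    ∃ c' u', CycReduced u' ∧ u' ≠ [] ∧ u'.length = u.length ∧
      Reduced (c' ++ u' ++ invRev c') ∧
      mk L * mk (c ++ u ++ invRev c) * (mk L)⁻¹ = mk (c' ++ u' ++ invRev c') := by
  induction L with
  | nil =>
    intro c u h1 h2 h3
    refine ⟨c, u, h1, h2, rfl, h3, ?_⟩
    have h0 : (mk ([] : List (α × Bool))) = 1 := FreeGroup.one_eq_mk.symm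
    rw [h0]; simp
  | cons a L ih =>
    intro c u h1 h2 h3
    obtain ⟨c', u', p1, p2, p3, p4, heq⟩ := ih c u h1 h2 h3
    obtain ⟨c'', u'', q1, q2, q3, q4, heq2⟩ := conj_letter a c' u' p1 p2 p4
    refine ⟨c'', u'', q1, q2, by rw [q3, p3], q4, ?_⟩
    have hsplit : mk (a :: L) = mk [a] * mk L := by
      rw [FreeGroup.mul_mk, List.singleton_append]
    rw [hsplit, mul_inv_rev]
    calc mk [a] * mk L * mk (c ++ u ++ invRev c) * ((mk L)⁻¹ * (mk [a])⁻¹)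
        = mk [a] * (mk L * mk (c ++ u ++ invRev c) * (mk L)⁻¹) * (mk [a])⁻¹ := by group
      _ = mk [a] * mk (c' ++ u' ++ invRev c') * (mk [a])⁻¹ := by rw [heq]
      _ = mk (c'' ++ u'' ++ invRev c'') := heq2

/-- A cyclically reduced word has minimal length in its conjugacy class. -/
lemma length_le_toWord_conj {u : List (α × Bool)} (hu : CycReduced u) (h : FreeGroup α) :
    u.length ≤ ((h * mk u * h⁻¹).toWord).length := by
  rcases eq_or_ne u [] with rfl | hne
  · simp
  · obtain ⟨c', u', q1, q2, q3, q4, heq⟩ := conj_word h.toWord [] u hu hne (by simpa using hu.1)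
    rw [mk_toWord] at heq
    have hshape : (([] : List (α × Bool)) ++ u ++ invRev []) = u := by simp
    rw [hshape] at heq
    rw [heq, toWord_mk_reduced q4]
    simp only [List.length_append, invRev_length]
    omega

/-- replicate words are reduced -/
lemma reduced_replicate (m : ℕ) (p : α × Bool) : Reduced (List.replicate m p) := by
  induction m with
  | zero => simp
  | succ k ih =>
    rw [List.replicate_succ]
    refine reduced_cons.2 ⟨?_, ih⟩
    intro q hq
    have : q = p := by
      cases k with
      | zero => simp at hq
      | succ k' =>
        rw [List.replicate_succ] at hq
        simpa using hq.symm
    subst this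
    exact not_cancels_self q

/-- The reduced word for `of i ^ a`, `a : ℤ`. -/
def blockW (i : α) (a : ℤ) : List (α × Bool) :=
  if 0 ≤ a then List.replicate a.toNat (i, true) else List.replicate (-a).toNat (i, false)

lemma reduced_blockW (i : α) (a : ℤ) : Reduced (blockW i a) := by
  unfold blockW; split <;> apply reduced_replicate

lemma mem_blockW {i : α} {a : ℤ} {p : α × Bool} (hp : p ∈ blockW i a) : p.1 = i := by
  unfold blockW at hp
  split at hp <;> rw [List.eq_of_mem_replicate hp]

lemma length_blockW (i : α) (a : ℤ) : (blockW i a).length = a.natAbs := by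
  unfold blockW; split <;> simp <;> omega

lemma blockW_ne_nil {i : α} {a : ℤ} (ha : a ≠ 0) : blockW i a ≠ [] := by
  intro h
  have h2 := length_blockW i a
  rw [h] at h2
  simp at h2
  omega

lemma of_zpow_eq_mk_blockW (i : α) (a : ℤ) : (of i : FreeGroup α) ^ a = mk (blockW i a) := by
  have hnat : ∀ m : ℕ, (of i : FreeGroup α) ^ (m : ℕ) = mk (List.replicate m (i, true)) := by
    intro m
    conv_lhs => rw [← mk_toWord (x := of i ^ m)]
    rw [toWord_of_pow]
  have hinvRev : ∀ m : ℕ, invRev (List.replicate m (i, true)) = List.replicate m (i, false) := by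
    intro m; simp [FreeGroup.invRev]
  unfold blockW
  split
  case isTrue h =>
    have he : (of i : FreeGroup α) ^ a = of i ^ (a.toNat : ℕ) := by
      rw [← zpow_natCast]; congr 1; omega
    rw [he, hnat]
  case isFalse h =>
    have he : (of i : FreeGroup α) ^ a = (of i ^ ((-a).toNat : ℕ))⁻¹ := by
      rw [← zpow_natCast, ← zpow_neg]; congr 1; omega
    rw [he, hnat, FreeGroup.inv_mk, hinvRev]

/-- Strip the maximal power of the generator `i` from the left. -/
lemma strip_left (i : α) : ∀ (L : List (α × Bool)), Reduced L →
    ∃ (a : ℤ) (V : List (α × Bool)), Reduced V ∧ V <:+ L ∧ (∀ q ∈ V.head?, q.1 ≠ i) ∧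
      mk L = (of i) ^ a * mk V := by
  intro L
  induction L with
  | nil => exact fun _ => ⟨0, [], reduced_nil, by simp, by simp, by simp⟩
  | cons p T ih =>
    intro h
    by_cases hp : p.1 = i
    · obtain ⟨a, V, hV, hsuf, hhead, heq⟩ := ih h.tail
      refine ⟨(if p.2 then 1 else -1) + a, V, hV, hsuf.trans (List.suffix_cons p T), hhead, ?_⟩
      have hmk : mk (p :: T) = mk [p] * mk T := by
        rw [FreeGroup.mul_mk, List.singleton_append]
      have hletter : mk [p] = (of i) ^ (if p.2 then (1:ℤ) else -1) := by
        rcases p with ⟨x, b⟩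
        simp only at hp
        subst hp
        cases b
        · have hif : (if (false : Bool) = true then (1:ℤ) else -1) = -1 := by simp
          rw [hif, zpow_neg, zpow_one]
          rw [show (of x : FreeGroup α) = mk [(x, true)] from rfl, FreeGroup.inv_mk]
          congr 1
        · have hif : (if (true : Bool) = true then (1:ℤ) else -1) = 1 := by simp
          rw [hif, zpow_one]
          rfl
      rw [hmk, hletter, heq, ← mul_assoc, ← zpow_add]
    · refine ⟨0, p :: T, h, List.suffix_rfl, ?_, by simp⟩
      intro q hq
      have : q = p := by simpa using hq.symm
      subst this
      exact hp

/-- Strip the maximal power of the generator `j` from the right. -/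
lemma strip_right (j : α) (L : List (α × Bool)) (h : Reduced L) :
    ∃ (b : ℤ) (V : List (α × Bool)), Reduced V ∧ (∀ q ∈ V.getLast?, q.1 ≠ j) ∧
      (V.head? = L.head? ∨ V = []) ∧ mk L = mk V * (of j) ^ b := by
  obtain ⟨a, W, hW, hsuf, hhead, heq⟩ := strip_left j (invRev L) (reduced_invRev h)
  refine ⟨-a, invRev W, reduced_invRev hW, ?_, ?_, ?_⟩
  · intro q hq
    rw [getLast?_invRev] at hq
    rcases hW' : W.head? with _ | r
    · rw [hW'] at hq; simp at hq
    · rw [hW'] at hq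
      have : q = invPair r := by simpa using hq.symm
      subst this
      have := hhead r (by rw [hW']; rfl)
      simpa [invPair] using this
  · rcases eq_or_ne W [] with rfl | hWne
    · right; rfl
    · left
      obtain ⟨Y, hY⟩ := hsuf
      have hlast : W.getLast? = (invRev L).getLast? := by
        rw [← hY, List.getLast?_append_of_ne_nil _ hWne]
      rw [head?_invRev, hlast, getLast?_invRev]
      cases L.head? <;> simp
  · have hinv : (mk L)⁻¹ = (of j) ^ a * mk W := by
      rw [FreeGroup.inv_mk]; exact heq
    calc mk L = ((mk L)⁻¹)⁻¹ := (inv_inv _).symm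
      _ = ((of j) ^ a * mk W)⁻¹ := by rw [hinv]
      _ = (mk W)⁻¹ * (of j) ^ (-a) := by rw [mul_inv_rev, zpow_neg]
      _ = mk (invRev W) * (of j) ^ (-a) := by rw [FreeGroup.inv_mk]

lemma not_cancels_of_ne_idx {p q : α × Bool} (h : p.1 ≠ q.1) : ¬ Cancels p q :=
  fun hc => h hc.1

lemma head?_idx_blockW {i : α} {a : ℤ} : ∀ p ∈ (blockW i a).head?, p.1 = i := by
  intro p hp
  rcases hB : blockW i a with _ | ⟨x, t⟩
  · rw [hB] at hp; simp at hp
  · rw [hB] at hp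
    have hx : x = p := by simpa using hp
    subst hx
    exact mem_blockW (hB ▸ List.mem_cons_self (a := x) (l := t))

lemma mem_of_getLast?' {β : Type*} {l : List β} {a : β} (h : a ∈ l.getLast?) : a ∈ l := by
  have h2 := List.dropLast_append_getLast? a h
  rw [← h2]
  simp

lemma getLast?_idx_blockW {i : α} {a : ℤ} : ∀ p ∈ (blockW i a).getLast?, p.1 = i := by
  intro p hp
  exact mem_blockW (mem_of_getLast?' hp)

/-- the word `V · (j,true) · V⁻¹` -/
def conjword (V : List (α × Bool)) (j : α) : List (α × Bool) := V ++ [(j, true)] ++ invRev V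

lemma mk_conjword (V : List (α × Bool)) (j : α) :
    mk (conjword V j) = mk V * of j * (mk V)⁻¹ := by
  unfold conjword
  rw [FreeGroup.inv_mk, show (of j : FreeGroup α) = mk [(j, true)] from rfl,
    FreeGroup.mul_mk, FreeGroup.mul_mk]

lemma length_conjword (V : List (α × Bool)) (j : α) :
    (conjword V j).length = 2 * V.length + 1 := by
  simp [conjword, invRev_length]
  omega

lemma conjword_ne_nil (V : List (α × Bool)) (j : α) : conjword V j ≠ [] := by
  simp [conjword]

lemma reduced_conjword {V : List (α × Bool)} {j : α} (hV : Reduced V)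
    (hlast : ∀ p ∈ V.getLast?, p.1 ≠ j) : Reduced (conjword V j) := by
  unfold conjword
  refine reduced_append.2 ⟨?_, reduced_invRev hV, ?_⟩
  · refine reduced_append.2 ⟨hV, reduced_singleton _, ?_⟩
    intro p hp q hq
    have hq' : (j, true) = q := by simpa using hq
    subst hq'
    exact fun hc => hlast p hp hc.1
  · intro p hp q hq
    rw [List.getLast?_concat] at hp
    have hp' : (j, true) = p := by simpa using hp
    subst hp'
    rw [head?_invRev] at hq
    rcases hV' : V.getLast? with _ | r
    · rw [hV'] at hq; simp at hq
    · rw [hV'] at hq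
      have hq' : invPair r = q := by simpa using hq
      subst hq'
      intro hc
      exact hlast r (by rw [hV']; rfl) (by simpa [invPair] using hc.1.symm)

lemma conjword_head_ne {V : List (α × Bool)} {j i : α} (hj : j ≠ i)
    (hV : ∀ p ∈ V.head?, p.1 ≠ i) : ∀ p ∈ (conjword V j).head?, p.1 ≠ i := by
  intro p hp
  unfold conjword at hp
  cases V with
  | nil =>
    have : (j, true) = p := by simpa using hp
    subst this
    exact hj
  | cons x t =>
    rw [head?_append_left (by simp), head?_append_left (by simp)] at hp
    exact hV p hp

lemma conjword_last_ne {V : List (α × Bool)} {j i : α} (hj : j ≠ i)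
    (hV : ∀ p ∈ V.head?, p.1 ≠ i) : ∀ p ∈ (conjword V j).getLast?, p.1 ≠ i := by
  intro p hp
  unfold conjword at hp
  cases V with
  | nil =>
    have : (j, true) = p := by simpa using hp
    subst this
    exact hj
  | cons x t =>
    rw [List.getLast?_append_of_ne_nil _ (by simp [invRev_cons])] at hp
    rw [getLast?_invRev] at hp
    have : invPair x = p := by simpa using hp
    subst this
    exact fun hc => hV x (by simp) hc

/-- Test word `x_i · (V x_j V⁻¹)` is cyclically reduced. -/
lemma cyc_D1 {V : List (α × Bool)} {i j : α} (hij : j ≠ i) (hV : Reduced V)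
    (hhead : ∀ p ∈ V.head?, p.1 ≠ i) (hlast : ∀ p ∈ V.getLast?, p.1 ≠ j) :
    CycReduced ((i, true) :: conjword V j) ∧
    mk ((i, true) :: conjword V j) = of i * (mk V * of j * (mk V)⁻¹) := by
  refine ⟨⟨?_, ?_⟩, ?_⟩
  · refine reduced_cons.2 ⟨?_, reduced_conjword hV hlast⟩
    intro q hq
    have hne := conjword_head_ne hij hhead q hq
    exact fun hc => hne hc.1.symm
  · intro p hp q hq
    have hq' : ((i, true) : α × Bool) = q := by simpa using hq
    subst hq'
    rw [getLast?_cons_ne_nil (conjword_ne_nil V j)] at hp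
    have hne := conjword_last_ne hij hhead p hp
    exact fun hc => hne hc.1
  · have hsplit : mk ((i, true) :: conjword V j) = mk [(i, true)] * mk (conjword V j) := by
      rw [FreeGroup.mul_mk, List.singleton_append]
    rw [hsplit, mk_conjword]
    rfl

/-- Test word `(V x_j V⁻¹) · x_i^δ · (V' x_j' V'⁻¹) · x_i^(-δ)` is cyclically reduced. -/
lemma cyc_D2 {V V' : List (α × Bool)} {i j j' : α} (hj : j ≠ i) (hj' : j' ≠ i)
    {δ : ℤ} (hδ : δ ≠ 0)
    (hV : Reduced V) (hVh : ∀ p ∈ V.head?, p.1 ≠ i) (hVl : ∀ p ∈ V.getLast?, p.1 ≠ j)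
    (hV' : Reduced V') (hV'h : ∀ p ∈ V'.head?, p.1 ≠ i)
    (hV'l : ∀ p ∈ V'.getLast?, p.1 ≠ j') :
    CycReduced (conjword V j ++ blockW i δ ++ conjword V' j' ++ blockW i (-δ)) ∧
    mk (conjword V j ++ blockW i δ ++ conjword V' j' ++ blockW i (-δ))
      = (mk V * of j * (mk V)⁻¹) * (of i ^ δ) * (mk V' * of j' * (mk V')⁻¹) * (of i ^ (-δ)) := by
  have hBne : blockW i δ ≠ [] := blockW_ne_nil hδ
  have hBne' : blockW i (-δ) ≠ [] := blockW_ne_nil (by omega)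
  have h12 : Reduced (conjword V j ++ blockW i δ) := by
    refine reduced_append.2 ⟨reduced_conjword hV hVl, reduced_blockW i δ, ?_⟩
    intro p hp q hq
    exact not_cancels_of_ne_idx (by
      rw [head?_idx_blockW q hq]
      exact conjword_last_ne hj hVh p hp)
  have h123 : Reduced (conjword V j ++ blockW i δ ++ conjword V' j') := by
    refine reduced_append.2 ⟨h12, reduced_conjword hV' hV'l, ?_⟩
    intro p hp q hq
    rw [List.getLast?_append_of_ne_nil _ hBne] at hp
    exact not_cancels_of_ne_idx (by
      rw [getLast?_idx_blockW p hp]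
      exact fun h => conjword_head_ne hj' hV'h q hq h.symm)
  have h1234 : Reduced (conjword V j ++ blockW i δ ++ conjword V' j' ++ blockW i (-δ)) := by
    refine reduced_append.2 ⟨h123, reduced_blockW i (-δ), ?_⟩
    intro p hp q hq
    rw [List.getLast?_append_of_ne_nil _ (conjword_ne_nil V' j')] at hp
    exact not_cancels_of_ne_idx (by
      rw [head?_idx_blockW q hq]
      exact conjword_last_ne hj' hV'h p hp)
  refine ⟨⟨h1234, ?_⟩, ?_⟩
  · intro p hp q hq
    rw [List.getLast?_append_of_ne_nil _ hBne'] at hp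
    rw [head?_append_left (by simp [conjword_ne_nil]), head?_append_left (by simp [conjword_ne_nil]),
      head?_append_left (conjword_ne_nil V j)] at hq
    exact not_cancels_of_ne_idx (by
      rw [getLast?_idx_blockW p hp]
      exact fun h => conjword_head_ne hj hVh q hq h.symm)
  · rw [← FreeGroup.mul_mk, ← FreeGroup.mul_mk, ← FreeGroup.mul_mk,
      mk_conjword, mk_conjword, ← of_zpow_eq_mk_blockW, ← of_zpow_eq_mk_blockW]

section ConjLength

variable {n : ℕ}

lemma conjLength_le (g h : FreeGroup (Fin n)) :
    conjLength g ≤ ((h * g * h⁻¹).toWord).length :=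
  Nat.sInf_le ⟨h, rfl⟩

lemma conjLength_le_norm (g : FreeGroup (Fin n)) : conjLength g ≤ g.toWord.length := by
  have h := conjLength_le g 1
  simpa using h

lemma exists_conjLength_witness (g : FreeGroup (Fin n)) :
    ∃ h, ((h * g * h⁻¹).toWord).length = conjLength g :=
  Nat.sInf_mem (⟨((1 : FreeGroup (Fin n)) * g * 1⁻¹).toWord.length, 1, rfl⟩ :
    Set.Nonempty {m : ℕ | ∃ h : FreeGroup (Fin n), ((h * g * h⁻¹).toWord).length = m})

lemma conjLength_conj (c g : FreeGroup (Fin n)) :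
    conjLength (c * g * c⁻¹) = conjLength g := by
  unfold conjLength
  congr 1
  ext m
  simp only [Set.mem_setOf_eq]
  constructor
  · rintro ⟨h, rfl⟩
    refine ⟨h * c, ?_⟩
    have he : h * c * g * (h * c)⁻¹ = h * (c * g * c⁻¹) * h⁻¹ := by group
    rw [he]
  · rintro ⟨h, rfl⟩
    refine ⟨h * c⁻¹, ?_⟩
    have he : h * c⁻¹ * (c * g * c⁻¹) * (h * c⁻¹)⁻¹ = h * g * h⁻¹ := by group
    rw [he]

lemma le_conjLength_of_cycReduced {u : List (Fin n × Bool)} (hu : CycReduced u) :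
    u.length ≤ conjLength (FreeGroup.mk u) := by
  apply le_csInf (⟨(((1:FreeGroup (Fin n)) * FreeGroup.mk u * 1⁻¹).toWord).length, 1, rfl⟩ :
    Set.Nonempty {m : ℕ | ∃ h : FreeGroup (Fin n),
      ((h * FreeGroup.mk u * h⁻¹).toWord).length = m})
  rintro m ⟨h, rfl⟩
  exact length_le_toWord_conj hu h

end ConjLength

section AutLayer

variable {n : ℕ}

/-- Two automorphisms that differ by an inner automorphism. -/
def InnEq (A B : MulAut (FreeGroup (Fin n))) : Prop :=
  ∃ c, ∀ g, A g = c * B g * c⁻¹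

lemma innEq_refl (A : MulAut (FreeGroup (Fin n))) : InnEq A A :=
  ⟨1, fun g => by simp⟩

lemma innEq_mul {A₁ B₁ A₂ B₂ : MulAut (FreeGroup (Fin n))} (h1 : InnEq A₁ B₁)
    (h2 : InnEq A₂ B₂) : InnEq (A₁ * A₂) (B₁ * B₂) := by
  obtain ⟨a, ha⟩ := h1
  obtain ⟨b, hb⟩ := h2
  refine ⟨A₁ b * a, fun g => ?_⟩
  have e1 : (A₁ * A₂) g = A₁ (A₂ g) := rfl
  have e2 : (B₁ * B₂) g = B₁ (B₂ g) := rfl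
  rw [e1, e2, hb g]
  simp only [_root_.map_mul, _root_.map_inv]
  rw [ha (B₂ g)]
  group

lemma innEq_pow {A B : MulAut (FreeGroup (Fin n))} (h : InnEq A B) (k : ℕ) :
    InnEq (A ^ k) (B ^ k) := by
  induction k with
  | zero => simpa using innEq_refl (1 : MulAut (FreeGroup (Fin n)))
  | succ t ih =>
    rw [pow_succ, pow_succ]
    exact innEq_mul ih h

lemma InnEq.conjLength_eq {A B : MulAut (FreeGroup (Fin n))} (h : InnEq A B)
    (g : FreeGroup (Fin n)) : conjLength (A g) = conjLength (B g) := by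
  obtain ⟨c, hc⟩ := h
  rw [hc g, conjLength_conj]

lemma conj_pow_stable {A : MulAut (FreeGroup (Fin n))} {x : FreeGroup (Fin n)}
    (h : ∃ c, A x = c * x * c⁻¹) : ∀ q : ℕ, ∃ c, (A ^ q) x = c * x * c⁻¹ := by
  intro q
  induction q with
  | zero => exact ⟨1, by simp⟩
  | succ t ih =>
    obtain ⟨c, hc⟩ := ih
    obtain ⟨c₀, hc₀⟩ := h
    refine ⟨A c * c₀, ?_⟩
    have e1 : (A ^ (t+1)) x = A ((A ^ t) x) := by
      rw [pow_succ']; rfl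
    rw [e1, hc]
    simp only [_root_.map_mul, _root_.map_inv]
    rw [hc₀]
    group

lemma inner_pow {A : MulAut (FreeGroup (Fin n))} {w : FreeGroup (Fin n)}
    (h : ∀ g, A g = w * g * w⁻¹) : ∀ q : ℕ, ∃ c, ∀ g, (A ^ q) g = c * g * c⁻¹ := by
  intro q
  induction q with
  | zero => exact ⟨1, fun g => by simp⟩
  | succ t ih =>
    obtain ⟨c, hc⟩ := ih
    refine ⟨A c * w, fun g => ?_⟩
    have e1 : (A ^ (t+1)) g = A ((A ^ t) g) := by
      rw [pow_succ']; rfl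
    rw [e1, hc]
    simp only [_root_.map_mul, _root_.map_inv]
    rw [h c, h g]
    group

lemma fixed_pow {A : MulAut (FreeGroup (Fin n))} {x : FreeGroup (Fin n)} (h : A x = x) :
    ∀ q : ℕ, (A ^ q) x = x := by
  intro q
  induction q with
  | zero => simp
  | succ t ih =>
    have e1 : (A ^ (t+1)) x = A ((A ^ t) x) := by
      rw [pow_succ']; rfl
    rw [e1, ih, h]

lemma exists_lt_eq {β : Type*} [Finite β] (f : ℕ → β) : ∃ k l, k < l ∧ f k = f l := by
  obtain ⟨k, l, hne, h⟩ := Finite.exists_ne_map_eq_of_infinite f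
  rcases hne.lt_or_gt with h' | h'
  · exact ⟨k, l, h', h⟩
  · exact ⟨l, k, h', h.symm⟩

instance finite_words (D : ℕ) : Finite {L : List (Fin n × Bool) // L.length ≤ D} :=
  Set.Finite.to_subtype (List.finite_length_le _ D)

instance finite_bddInt (D : ℕ) : Finite {z : ℤ // z.natAbs ≤ D} := by
  have h : {z : ℤ | z.natAbs ≤ D}.Finite := by
    apply (Set.finite_Icc (-(D:ℤ)) (D:ℤ)).subset
    intro z hz
    simp only [Set.mem_setOf_eq] at hz
    simp only [Set.mem_Icc]
    omega
  exact Set.Finite.to_subtype h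

/-- If all the conjugacy lengths of the iterates of `x` are bounded, some iterate of `x`
is conjugate to `x`. -/
lemma exists_pow_conj (A : MulAut (FreeGroup (Fin n))) (x : FreeGroup (Fin n)) (C : ℕ)
    (hC : ∀ k : ℕ, 1 ≤ k → conjLength ((A ^ k) x) ≤ C) :
    ∃ m : ℕ, 1 ≤ m ∧ ∃ c, (A ^ m) x = c * x * c⁻¹ := by
  have key : ∀ k : ℕ, ∃ h : FreeGroup (Fin n),
      ((h * (A ^ (k+1)) x * h⁻¹).toWord).length ≤ C := by
    intro k
    obtain ⟨h, hh⟩ := exists_conjLength_witness ((A ^ (k+1)) x)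
    exact ⟨h, by rw [hh]; exact hC (k+1) (by omega)⟩
  choose hs hlen using key
  set f : ℕ → {L : List (Fin n × Bool) // L.length ≤ C} :=
    fun k => ⟨(hs k * (A ^ (k+1)) x * (hs k)⁻¹).toWord, hlen k⟩ with hf
  obtain ⟨k, l, hkl, hfe⟩ := exists_lt_eq f
  have heq : hs k * (A ^ (k+1)) x * (hs k)⁻¹ = hs l * (A ^ (l+1)) x * (hs l)⁻¹ := by
    apply FreeGroup.toWord_injective
    exact congrArg Subtype.val hfe
  refine ⟨l - k, by omega, ?_⟩
  set ρ := (A ^ (k+1))⁻¹ with hρ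
  have hx : ρ ((A ^ (k+1)) x) = x := by
    have : ρ ((A ^ (k+1)) x) = (ρ * A ^ (k+1)) x := rfl
    rw [this, hρ, inv_mul_cancel]
    rfl
  have hy : ρ ((A ^ (l+1)) x) = (A ^ (l - k)) x := by
    have h1 : ρ ((A ^ (l+1)) x) = (ρ * A ^ (l+1)) x := rfl
    rw [h1, hρ]
    have h2 : (A ^ (k+1))⁻¹ * A ^ (l+1) = A ^ (l - k) := by
      rw [show l + 1 = (k+1) + (l - k) by omega, pow_add]
      group
    rw [h2]
  have hmain := congrArg ρ heq
  simp only [_root_.map_mul, _root_.map_inv] at hmain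
  rw [hx, hy] at hmain
  refine ⟨(ρ (hs l))⁻¹ * ρ (hs k), ?_⟩
  calc (A ^ (l-k)) x
      = (ρ (hs l))⁻¹ * (ρ (hs l) * (A ^ (l-k)) x * (ρ (hs l))⁻¹) * ρ (hs l) := by group
    _ = (ρ (hs l))⁻¹ * (ρ (hs k) * x * (ρ (hs k))⁻¹) * ρ (hs l) := by rw [← hmain]
    _ = ((ρ (hs l))⁻¹ * ρ (hs k)) * x * ((ρ (hs l))⁻¹ * ρ (hs k))⁻¹ := by group

lemma atMost_zero_bound {φ : MulAut (FreeGroup (Fin n))} {g : FreeGroup (Fin n)}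
    (h : ConjClassGrowsAtMost φ g 0) :
    ∃ C : ℕ, ∀ k, 1 ≤ k → conjLength ((φ ^ k) g) ≤ C := by
  obtain ⟨C, hC0, hC⟩ := h
  refine ⟨⌈C⌉₊, fun k hk => ?_⟩
  have h1 := hC k hk
  rw [pow_zero, mul_one] at h1
  exact_mod_cast h1.trans (Nat.le_ceil C)

end AutLayer

lemma conjLength_zpow_conj {n : ℕ} (i : Fin n) (a : ℤ) (X : FreeGroup (Fin n)) :
    conjLength (FreeGroup.of i ^ a * X * FreeGroup.of i ^ (-a)) = conjLength X := by
  have h : FreeGroup.of i ^ a * X * FreeGroup.of i ^ (-a)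
      = (FreeGroup.of i ^ a) * X * (FreeGroup.of i ^ a)⁻¹ := by group
  rw [h, conjLength_conj]

/-- The hard direction: bounded conjugacy growth implies a power of `φ` is inner. -/
theorem main_forward {n : ℕ} (hn : 1 ≤ n) (φ : MulAut (FreeGroup (Fin n)))
    (hb : ∀ g, ∃ C : ℕ, ∀ k, 1 ≤ k → conjLength ((φ ^ k) g) ≤ C) :
    ∃ k : ℕ, 1 ≤ k ∧ ∃ w : FreeGroup (Fin n), ∀ g, (φ ^ k) g = w * g * w⁻¹ := by
  classical
  set i₀ : Fin n := ⟨0, hn⟩ with hi₀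
  -- Step A : make a power of φ fix x₁ = of i₀ exactly, up to inner
  obtain ⟨C₁, hC₁⟩ := hb (of i₀)
  obtain ⟨m, hm1, c₁, hc₁⟩ := exists_pow_conj φ (of i₀) C₁ hC₁
  set Ψ : MulAut (FreeGroup (Fin n)) := MulAut.conj c₁⁻¹ * φ ^ m with hΨ
  have hΨapp : ∀ g, Ψ g = c₁⁻¹ * (φ ^ m) g * c₁ := by
    intro g
    have h0 : Ψ g = MulAut.conj c₁⁻¹ ((φ ^ m) g) := rfl
    rw [h0, MulAut.conj_apply, inv_inv]
  have hΨx₁ : Ψ (of i₀) = of i₀ := by rw [hΨapp, hc₁]; group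
  have hΨinn : InnEq Ψ (φ ^ m) := ⟨c₁⁻¹, fun g => by rw [hΨapp]; group⟩
  have hΨpow : ∀ k, InnEq (Ψ ^ k) (φ ^ (m * k)) := by
    intro k
    have h0 := innEq_pow hΨinn k
    rwa [← pow_mul] at h0
  have hbΨ : ∀ g, ∃ C : ℕ, ∀ k, 1 ≤ k → conjLength ((Ψ ^ k) g) ≤ C := by
    intro g
    obtain ⟨C, hC⟩ := hb g
    refine ⟨C, fun k hk => ?_⟩
    rw [(hΨpow k).conjLength_eq g]
    exact hC (m * k) (Nat.one_le_iff_ne_zero.2 (Nat.mul_ne_zero (by omega) (by omega)))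
  -- Step B : a further power Φ makes every generator's class fixed
  have hper : ∀ j : Fin n, ∃ p, 1 ≤ p ∧
      ∃ c, (Ψ ^ p) (of j) = c * of j * c⁻¹ := by
    intro j
    obtain ⟨C, hC⟩ := hbΨ (of j)
    exact exists_pow_conj Ψ (of j) C hC
  choose pj hpj1 hpjc using hper
  set p : ℕ := ∏ j : Fin n, pj j with hp
  have hp1 : 1 ≤ p := Finset.one_le_prod' (fun j _ => hpj1 j)
  set Φ : MulAut (FreeGroup (Fin n)) := Ψ ^ p with hΦ
  have hΦpowΨ : ∀ k, Φ ^ k = Ψ ^ (p * k) := fun k => by rw [hΦ, ← pow_mul]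
  have hΦx₁ : ∀ k, (Φ ^ k) (of i₀) = of i₀ := by
    intro k
    rw [hΦpowΨ]
    exact fixed_pow hΨx₁ (p * k)
  have hΦconj : ∀ (j : Fin n) (k : ℕ), ∃ c, (Φ ^ k) (of j) = c * of j * c⁻¹ := by
    intro j k
    obtain ⟨t, ht⟩ := Finset.dvd_prod_of_mem pj (Finset.mem_univ j)
    have hpt : p = pj j * t := ht
    have h1 : Φ ^ k = (Ψ ^ pj j) ^ (t * k) := by
      rw [hΦpowΨ k, ← pow_mul]
      congr 1
      rw [hpt, mul_assoc]
    rw [h1]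
    exact conj_pow_stable (hpjc j) (t * k)
  have hΦinn : ∀ k, InnEq (Φ ^ k) (φ ^ (m * (p * k))) := by
    intro k
    rw [hΦpowΨ]
    exact hΨpow (p * k)
  have hbΦ : ∀ g, ∃ C : ℕ, ∀ k, 1 ≤ k → conjLength ((Φ ^ k) g) ≤ C := by
    intro g
    obtain ⟨C, hC⟩ := hb g
    refine ⟨C, fun k hk => ?_⟩
    rw [(hΦinn k).conjLength_eq g]
    exact hC (m * (p * k)) (Nat.one_le_iff_ne_zero.2 (Nat.mul_ne_zero (by omega)
      (Nat.mul_ne_zero (by omega) (by omega))))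
  -- uniform bounds
  choose D1f hD1f using fun j : Fin n => hbΦ (of i₀ * of j)
  set D₁ : ℕ := Finset.univ.sup D1f with hD₁def
  have hD₁ : ∀ (j : Fin n) (k : ℕ), 1 ≤ k →
      conjLength ((Φ ^ k) (of i₀ * of j)) ≤ D₁ :=
    fun j k hk => (hD1f j k hk).trans (Finset.le_sup (Finset.mem_univ j))
  choose D2f hD2f using fun jj : Fin n × Fin n => hbΦ (of jj.1 * of jj.2)
  set D₂ : ℕ := Finset.univ.sup D2f with hD₂def
  have hD₂ : ∀ (j j' : Fin n) (k : ℕ), 1 ≤ k →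
      conjLength ((Φ ^ k) (of j * of j')) ≤ D₂ :=
    fun j j' k hk => (hD2f (j, j') k hk).trans (Finset.le_sup (Finset.mem_univ (j, j')))
  -- Step C : normal form data for the images of the generators
  have hdata : ∀ (k : ℕ) (j : Fin n), j ≠ i₀ →
      ∃ (a : ℤ) (V : List (Fin n × Bool)), Reduced V ∧ (∀ q ∈ V.head?, q.1 ≠ i₀) ∧
        (∀ q ∈ V.getLast?, q.1 ≠ j) ∧ V.length ≤ D₁ ∧
        (Φ ^ (k+1)) (of j)
          = of i₀ ^ a * (mk V * of j * (mk V)⁻¹) * of i₀ ^ (-a) := by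
    intro k j hj
    obtain ⟨c, hc⟩ := hΦconj j (k+1)
    obtain ⟨a, V', hV', hsuf, hV'h, heqL⟩ := strip_left i₀ c.toWord (reduced_toWord c)
    obtain ⟨b, V, hV, hVl, hVh_or, heqR⟩ := strip_right j V' hV'
    have hVh : ∀ q ∈ V.head?, q.1 ≠ i₀ := by
      rcases hVh_or with hsame | hnil
      · intro q hq; exact hV'h q (hsame ▸ hq)
      · intro q hq; rw [hnil] at hq; simp at hq
    have hcval : c = of i₀ ^ a * (mk V * of j ^ b) := by
      conv_lhs => rw [← FreeGroup.mk_toWord (x := c)]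
      rw [heqL, heqR]
    have hkey : (Φ ^ (k+1)) (of j)
        = of i₀ ^ a * (mk V * of j * (mk V)⁻¹) * of i₀ ^ (-a) := by
      rw [hc, hcval]
      group
    refine ⟨a, V, hV, hVh, hVl, ?_, hkey⟩
    have hb1 := hD₁ j (k+1) (by omega)
    have hexp : (Φ ^ (k+1)) (of i₀ * of j)
        = of i₀ ^ a * (of i₀ * (mk V * of j * (mk V)⁻¹)) * of i₀ ^ (-a) := by
      rw [_root_.map_mul, hΦx₁ (k+1), hkey]
      group
    obtain ⟨hcyc, hmkeq⟩ := cyc_D1 (V := V) (i := i₀) (j := j) hj hV hVh hVl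
    have hlow : ((i₀, true) :: conjword V j).length
        ≤ conjLength ((Φ ^ (k+1)) (of i₀ * of j)) := by
      rw [hexp, conjLength_zpow_conj, ← hmkeq]
      exact le_conjLength_of_cycReduced hcyc
    have hlen2 : ((i₀, true) :: conjword V j).length = 2 * V.length + 2 := by
      simp [length_conjword]
    have hfin := hlow.trans hb1
    omega
  choose aF VF hVred hVhead hVlast hVlen hVeq using hdata
  -- Step D : the x₁-offsets of different generators differ boundedly
  have hpair : ∀ (k : ℕ) (j j' : Fin n) (hj : j ≠ i₀) (hj' : j' ≠ i₀),
      (aF k j' hj' - aF k j hj).natAbs ≤ D₂ := by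
    intro k j j' hj hj'
    by_cases hδ : aF k j' hj' - aF k j hj = 0
    · rw [hδ]; simp
    · have hb2 := hD₂ j j' (k+1) (by omega)
      have hexp : (Φ ^ (k+1)) (of j * of j')
          = of i₀ ^ (aF k j hj) *
              ((mk (VF k j hj) * of j * (mk (VF k j hj))⁻¹)
                * of i₀ ^ (aF k j' hj' - aF k j hj)
                * (mk (VF k j' hj') * of j' * (mk (VF k j' hj'))⁻¹)
                * of i₀ ^ (-(aF k j' hj' - aF k j hj)))
            * of i₀ ^ (-(aF k j hj)) := by
        rw [_root_.map_mul, hVeq k j hj, hVeq k j' hj']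
        group
      obtain ⟨hcyc, hmkeq⟩ := cyc_D2 hj hj' hδ (hVred k j hj) (hVhead k j hj)
        (hVlast k j hj) (hVred k j' hj') (hVhead k j' hj') (hVlast k j' hj')
      have hlow : (conjword (VF k j hj) j ++ blockW i₀ (aF k j' hj' - aF k j hj)
            ++ conjword (VF k j' hj') j' ++ blockW i₀ (-(aF k j' hj' - aF k j hj))).length
          ≤ conjLength ((Φ ^ (k+1)) (of j * of j')) := by
        rw [hexp, conjLength_zpow_conj, ← hmkeq]
        exact le_conjLength_of_cycReduced hcyc
      have habs : (aF k j' hj' - aF k j hj).natAbs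
          ≤ (conjword (VF k j hj) j ++ blockW i₀ (aF k j' hj' - aF k j hj)
            ++ conjword (VF k j' hj') j' ++ blockW i₀ (-(aF k j' hj' - aF k j hj))).length := by
        simp only [List.length_append, length_blockW]
        omega
      have hfin := (habs.trans hlow).trans hb2
      exact hfin
  -- Endgame
  by_cases hrank : ∀ j : Fin n, j = i₀
  · -- rank one: Φ is the identity
    have hkeyhom : MulEquiv.toMonoidHom Φ
        = MonoidHom.id (FreeGroup (Fin n)) := by
      apply FreeGroup.ext_hom
      intro j
      have hj := hrank j
      subst hj
      have h1 := hΦx₁ 1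
      rw [pow_one] at h1
      simpa using h1
    obtain ⟨c, hcX⟩ := hΦinn 1
    refine ⟨m * (p * 1), Nat.one_le_iff_ne_zero.2 (Nat.mul_ne_zero (by omega)
      (Nat.mul_ne_zero (by omega) (by omega))), c⁻¹, fun g => ?_⟩
    have h1 := hcX g
    have h2 : (Φ ^ 1) g = g := by
      rw [pow_one]
      have := DFunLike.congr_fun hkeyhom g
      simpa using this
    rw [h2] at h1
    calc (φ ^ (m * (p * 1))) g
        = c⁻¹ * (c * (φ ^ (m * (p * 1))) g * c⁻¹) * c := by group
      _ = c⁻¹ * g * c := by rw [← h1]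
      _ = c⁻¹ * g * (c⁻¹)⁻¹ := by group
  · -- rank at least two
    push_neg at hrank
    obtain ⟨j₂, hj₂⟩ := hrank
    set F : ℕ → (Fin n →
        ({z : ℤ // z.natAbs ≤ D₂} × {L : List (Fin n × Bool) // L.length ≤ D₁})) :=
      fun k j => if h : j = i₀ then (⟨0, by simp⟩, ⟨[], by simp⟩)
        else (⟨aF k j h - aF k j₂ hj₂, hpair k j₂ j hj₂ h⟩, ⟨VF k j h, hVlen k j h⟩)
      with hF
    obtain ⟨k, l, hkl, hfe⟩ := exists_lt_eq F
    set Δ : ℤ := aF l j₂ hj₂ - aF k j₂ hj₂ with hΔ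
    have hgen : ∀ j : Fin n, (Φ ^ (l+1)) (of j)
        = (of i₀ ^ Δ) * (Φ ^ (k+1)) (of j) * (of i₀ ^ Δ)⁻¹ := by
      intro j
      by_cases hj : j = i₀
      · subst hj
        rw [hΦx₁ (l+1), hΦx₁ (k+1)]
        group
      · have hcomp : F k j = F l j := congrFun hfe j
        rw [hF] at hcomp
        simp only [dif_neg hj] at hcomp
        have hVsame : VF k j hj = VF l j hj := by
          have := congrArg (fun z => (z.2 : List (Fin n × Bool))) hcomp
          simpa using this
        have haeq : aF k j hj - aF k j₂ hj₂ = aF l j hj - aF l j₂ hj₂ := by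
          have := congrArg (fun z => (z.1 : ℤ)) hcomp
          simpa using this
        have hal : aF l j hj = aF k j hj + Δ := by omega
        rw [hVeq l j hj, hVeq k j hj, ← hVsame, hal]
        group
    have hFhom : MulEquiv.toMonoidHom (Φ ^ (l+1))
        = MulEquiv.toMonoidHom (MulAut.conj (of i₀ ^ Δ) * Φ ^ (k+1)) := by
      apply FreeGroup.ext_hom
      intro j
      have h1 := hgen j
      simp only [MulEquiv.coe_toMonoidHom] at *
      rw [h1]
      have h2 : (MulAut.conj (of i₀ ^ Δ) * Φ ^ (k+1)) (of j)
          = MulAut.conj (of i₀ ^ Δ) ((Φ ^ (k+1)) (of j)) := rfl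
      rw [h2, MulAut.conj_apply]
    have hall : ∀ g, (Φ ^ (l+1)) g
        = (of i₀ ^ Δ) * (Φ ^ (k+1)) g * (of i₀ ^ Δ)⁻¹ := by
      intro g
      have h0 := DFunLike.congr_fun hFhom g
      simp only [MulEquiv.coe_toMonoidHom] at h0
      rw [h0]
      have h2 : (MulAut.conj (of i₀ ^ Δ) * Φ ^ (k+1)) g
          = MulAut.conj (of i₀ ^ Δ) ((Φ ^ (k+1)) g) := rfl
      rw [h2, MulAut.conj_apply]
    have hpow : ∀ g, (Φ ^ (l - k)) g = (of i₀ ^ Δ) * g * (of i₀ ^ Δ)⁻¹ := by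
      intro g
      have h1 : (Φ ^ (k+1)) ((Φ ^ (k+1))⁻¹ g) = g := by
        have e : (Φ ^ (k+1)) ((Φ ^ (k+1))⁻¹ g) = (Φ ^ (k+1) * (Φ ^ (k+1))⁻¹) g := rfl
        rw [e, mul_inv_cancel]
        rfl
      have h2 := hall ((Φ ^ (k+1))⁻¹ g)
      have h3 : (Φ ^ (l+1)) ((Φ ^ (k+1))⁻¹ g) = (Φ ^ (l - k)) g := by
        have e : (Φ ^ (l+1)) ((Φ ^ (k+1))⁻¹ g) = (Φ ^ (l+1) * (Φ ^ (k+1))⁻¹) g := rfl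
        rw [e]
        have e2 : Φ ^ (l+1) * (Φ ^ (k+1))⁻¹ = Φ ^ (l - k) := by
          rw [show l + 1 = (l - k) + (k+1) by omega, pow_add]
          group
        rw [e2]
      rw [h3, h1] at h2
      exact h2
    obtain ⟨c, hcX⟩ := hΦinn (l - k)
    refine ⟨m * (p * (l - k)), Nat.one_le_iff_ne_zero.2 (Nat.mul_ne_zero (by omega)
      (Nat.mul_ne_zero (by omega) (by omega))), c⁻¹ * of i₀ ^ Δ, fun g => ?_⟩
    have h1 := hcX g
    have h2 := hpow g
    rw [h1] at h2
    calc (φ ^ (m * (p * (l - k)))) g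
        = c⁻¹ * (c * (φ ^ (m * (p * (l - k)))) g * c⁻¹) * c := by group
      _ = c⁻¹ * ((of i₀ ^ Δ) * g * (of i₀ ^ Δ)⁻¹) * c := by rw [h2]
      _ = (c⁻¹ * of i₀ ^ Δ) * g * (c⁻¹ * of i₀ ^ Δ)⁻¹ := by group

end PGAux

/-- If `φ` grows polynomially of degree `d`, then `d = 0` if and only if `φ` has finite order
in `Out(F_n)`. -/
theorem polyGrowth_degree_zero_iff_finiteOrder (n : ℕ) (hn : 1 ≤ n)
    (φ : MulAut (FreeGroup (Fin n))) (d : ℕ) (h : AutGrowsPolyDeg φ d) :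
    d = 0 ↔ ∃ k : ℕ, 1 ≤ k ∧ ∃ w : FreeGroup (Fin n), ∀ g, (φ ^ k) g = w * g * w⁻¹ := by
  constructor
  · intro hd
    subst hd
    exact PGAux.main_forward hn φ (fun g => PGAux.atMost_zero_bound (h.1 g))
  · rintro ⟨k, hk1, w, hw⟩
    by_contra hd
    obtain ⟨g, C₁, C₂, hC₁, hC₂, hg⟩ := h.2
    -- conjugacy lengths along the orbit are bounded
    have hstep : ∀ k' : ℕ, ∃ c, (φ ^ k') g = c * (φ ^ (k' % k)) g * c⁻¹ := by
      intro k'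
      obtain ⟨c, hc⟩ := PGAux.inner_pow hw (k' / k)
      have he : φ ^ k' = φ ^ (k' % k) * (φ ^ k) ^ (k' / k) := by
        rw [← pow_mul, ← pow_add]
        congr 1
        exact (Nat.mod_add_div k' k).symm
      refine ⟨(φ ^ (k' % k)) c, ?_⟩
      have happ : (φ ^ k') g = (φ ^ (k' % k)) (((φ ^ k) ^ (k' / k)) g) := by
        rw [he]; rfl
      rw [happ, hc g]
      simp only [_root_.map_mul, _root_.map_inv]
    set M : ℕ := Finset.sup (Finset.range k) (fun r => ((φ ^ r) g).toWord.length) with hM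
    have hbound : ∀ k' : ℕ, conjLength ((φ ^ k') g) ≤ M := by
      intro k'
      obtain ⟨c, hc⟩ := hstep k'
      rw [hc, PGAux.conjLength_conj]
      refine (PGAux.conjLength_le_norm _).trans ?_
      exact Finset.le_sup (f := fun r => ((φ ^ r) g).toWord.length)
        (Finset.mem_range.2 (Nat.mod_lt k' (show 0 < k by omega)))
    have hd1 : 1 ≤ d := by omega
    have hlin : ∀ k' : ℕ, 1 ≤ k' → C₁ * (k' : ℝ) ≤ M := by
      intro k' hk'
      have h1 := (hg k' hk').1
      have hk'1 : (1 : ℝ) ≤ (k' : ℝ) := by exact_mod_cast hk'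
      have h2 : (k' : ℝ) ^ 1 ≤ (k' : ℝ) ^ d := pow_le_pow_right₀ hk'1 hd1
      have h3 : (conjLength ((φ ^ k') g) : ℝ) ≤ M := by exact_mod_cast hbound k'
      have h4 : C₁ * (k' : ℝ) ^ 1 ≤ C₁ * (k' : ℝ) ^ d :=
        mul_le_mul_of_nonneg_left h2 hC₁.le
      rw [pow_one] at h4
      linarith
    set k₀ : ℕ := ⌈(M : ℝ) / C₁⌉₊ + 1 with hk₀
    have hcon := hlin k₀ (by omega)
    have h5 : (k₀ : ℝ) ≤ (M : ℝ) / C₁ := by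
      rw [le_div_iff₀ hC₁]
      linarith
    have h6 : ((M : ℝ) / C₁) ≤ (⌈(M : ℝ) / C₁⌉₊ : ℝ) := Nat.le_ceil _
    have h7 : (k₀ : ℝ) = (⌈(M : ℝ) / C₁⌉₊ : ℝ) + 1 := by
      rw [hk₀]; push_cast; ring
    linarith
end
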